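/- arXiv:math/0510090 — 8 statements merged into one kernel-verified Lean document; each statement's English description precedes it below -/
import Mathlib

section
/- For every integer j ≥ 1, the image ψ(X^j k[[X]]) contains X^{j−1} k[[X]]; that is, for every h ∈ k[[X]] there exists f ∈ k[[X]] such that ψ(X^j f) = X^{j−1} h. -/
/-- For `g ∈ k⟦X⟧`, `substXp p g` is the power series `g(X^p)`, whose coefficient of
`X^(p*n)` is the coefficient of `X^n` in `g`, all other coefficients being zero. -/
noncomputable def substXp (p : ℕ) {k : Type*} [Field k] (g : PowerSeries k) : PowerSeries k :=
  PowerSeries.mk fun n => if p ∣ n then PowerSeries.coeff (n / p) g else 0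

lemma substXp_coeff (p : ℕ) {k : Type*} [Field k] (g : PowerSeries k) (n : ℕ) :
    PowerSeries.coeff n (substXp p g) =
      if p ∣ n then PowerSeries.coeff (n / p) g else 0 := by
  simp [substXp]

lemma substXp_zero (p : ℕ) {k : Type*} [Field k] : substXp p (0 : PowerSeries k) = 0 := by
  ext n; simp [substXp_coeff]

/-- If `ψ : k⟦X⟧ → k⟦X⟧` is the operator sending `f = ∑_{i=0}^{p-1} (1+X)^i g_i(X^p)`
to `g_0`, then for every `j ≥ 1` the image `ψ(X^j k⟦X⟧)` contains `X^(j-1) k⟦X⟧`: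
for every `h ∈ k⟦X⟧` there is `f ∈ k⟦X⟧` with `ψ(X^j f) = X^(j-1) h`. -/
theorem psi_image_of_ideal
    (p : ℕ) (hp : p.Prime) (k : Type*) [Field k] [Fintype k] [CharP k p]
    (ψ : PowerSeries k → PowerSeries k)
    (hψ : ∀ (f : PowerSeries k) (g : Fin p → PowerSeries k),
      f = ∑ i : Fin p, (1 + PowerSeries.X) ^ (i : ℕ) * substXp p (g i) → ψ f = g ⟨0, hp.pos⟩)
    (j : ℕ) (hj : 1 ≤ j) (h : PowerSeries k) :
    ∃ f : PowerSeries k, ψ (PowerSeries.X ^ j * f) = PowerSeries.X ^ (j - 1) * h := by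
  set i0 : Fin p := ⟨0, hp.pos⟩ with hi0
  rcases eq_or_lt_of_le hj with hj1 | hj2
  · -- j = 1
    subst hj1
    set i1 : Fin p := ⟨1, hp.one_lt⟩ with hi1
    set c : PowerSeries k := -(PowerSeries.C (PowerSeries.constantCoeff h)) with hc
    set g : Fin p → PowerSeries k := fun i => if i = i0 then h else if i = i1 then c else 0
      with hg
    have hsum : ∑ i : Fin p, (1 + PowerSeries.X) ^ (i : ℕ) * substXp p (g i)
        = substXp p h + (1 + PowerSeries.X) * substXp p c := by
      rw [Fintype.sum_eq_add i0 i1 (by simp [hi0, hi1, Fin.ext_iff])]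
      · simp [hg, hi0, hi1, Fin.ext_iff]
      · intro i hi
        simp [hg, hi.1, hi.2, substXp_zero]
    have hdvd : PowerSeries.X ∣ substXp p h + (1 + PowerSeries.X) * substXp p c := by
      rw [PowerSeries.X_dvd_iff]
      have h0 : ∀ u : PowerSeries k,
          PowerSeries.constantCoeff (substXp p u) = PowerSeries.constantCoeff u := by
        intro u
        rw [← PowerSeries.coeff_zero_eq_constantCoeff, substXp_coeff]
        simp
      simp [h0, hc]
    obtain ⟨f, hf⟩ := hdvd
    refine ⟨f, ?_⟩
    have := hψ (PowerSeries.X ^ 1 * f) g (by rw [hsum, pow_one, ← hf])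
    rw [this]
    simp [hg, hi0]
  · -- j ≥ 2
    set g : Fin p → PowerSeries k :=
      fun i => if i = i0 then PowerSeries.X ^ (j - 1) * h else 0 with hg
    have hsum : ∑ i : Fin p, (1 + PowerSeries.X) ^ (i : ℕ) * substXp p (g i)
        = substXp p (PowerSeries.X ^ (j - 1) * h) := by
      rw [Fintype.sum_eq_single i0]
      · simp [hg, hi0]
      · intro i hi
        simp [hg, hi, substXp_zero]
    have hdvd : PowerSeries.X ^ j ∣ substXp p (PowerSeries.X ^ (j - 1) * h) := by
      rw [PowerSeries.X_pow_dvd_iff]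
      intro n hn
      rw [substXp_coeff]
      split_ifs with hd
      · obtain ⟨m, rfl⟩ := hd
        rw [Nat.mul_div_cancel_left m hp.pos]
        have hm : m < j - 1 := by
          by_contra hm
          push_neg at hm
          have : 2 * m ≤ p * m := Nat.mul_le_mul_right m hp.two_le
          omega
        have : PowerSeries.X ^ (j - 1) ∣ PowerSeries.X ^ (j - 1) * h := Dvd.intro _ rfl
        exact (PowerSeries.X_pow_dvd_iff.mp this) m hm
      · rfl
    obtain ⟨f, hf⟩ := hdvd
    refine ⟨f, ?_⟩
    have := hψ (PowerSeries.X ^ j * f) g (by rw [hsum, ← hf])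
    rw [this]
    simp [hg, hi0]
end

section
/- There exists a unique map ι : ℤ_p → k[[X]] such that (i) ι(a+b) = ι(a)·ι(b) for all a, b ∈ ℤ_p, (ii) ι(1) = 1 + X, and (iii) for every n ≥ 0 the map a ↦ (coefficient of X^n in ι(a)) is locally constant on ℤ_p. Moreover ι takes values in the units of k[[X]] and is injective. -/
open PowerSeries

section Aux

variable {p : ℕ} [hp : Fact p.Prime] {k : Type*} [Field k] [CharP k p]

/-- `(1+y)^c = 1 + y*g` for some `g`. -/
lemma one_add_pow_aux {R : Type*} [CommRing R] (y : R) (c : ℕ) :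
    ∃ g : R, (1 + y) ^ c = 1 + y * g := by
  induction c with
  | zero => exact ⟨0, by ring⟩
  | succ c ih =>
    obtain ⟨g, hg⟩ := ih
    exact ⟨g + 1 + y * g, by rw [pow_succ, hg]; ring⟩

lemma lt_pow_of_lt {n N : ℕ} (h : n < N) : n < p ^ N := by
  calc n < 2 ^ n := n.lt_two_pow_self
  _ ≤ 2 ^ N := Nat.pow_le_pow_right (by norm_num) h.le
  _ ≤ p ^ N := Nat.pow_le_pow_left hp.out.two_le N

lemma choose_cast_le {m m' N n : ℕ} (hmm : m ≤ m') (h : m ≡ m' [MOD p ^ N])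
    (hn : n < p ^ N) : ((m'.choose n : k)) = (m.choose n : k) := by
  haveI : CharP (Polynomial k) p := charP_of_injective_ringHom (Polynomial.C_injective) p
  obtain ⟨c, hc⟩ := (Nat.modEq_iff_dvd' hmm).mp h
  have hm' : m' = m + p ^ N * c := by omega
  obtain ⟨g, hg⟩ := one_add_pow_aux (Polynomial.X ^ p ^ N : Polynomial k) c
  have key : ((Polynomial.X + 1 : Polynomial k) ^ m').coeff n
      = ((Polynomial.X + 1 : Polynomial k) ^ m).coeff n := by
    rw [hm', pow_add, pow_mul, add_pow_char_pow, one_pow, add_comm (Polynomial.X ^ p ^ N) 1,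
      hg, mul_add, mul_one, Polynomial.coeff_add]
    have : (Polynomial.X + 1 : Polynomial k) ^ m * (Polynomial.X ^ p ^ N * g)
        = ((Polynomial.X + 1) ^ m * g) * Polynomial.X ^ p ^ N := by ring
    rw [this, Polynomial.coeff_mul_X_pow', if_neg (by omega)]
    simp
  rwa [Polynomial.coeff_X_add_one_pow, Polynomial.coeff_X_add_one_pow] at key

lemma choose_cast_eq {m m' N n : ℕ} (h : m ≡ m' [MOD p ^ N]) (hn : n < p ^ N) :
    ((m.choose n : k)) = (m'.choose n : k) := by
  rcases le_total m m' with hle | hle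
  · exact (choose_cast_le hle h hn).symm
  · exact choose_cast_le hle h.symm hn

lemma nat_modEq_of_mem_span {A B N : ℕ}
    (h : ((A : ℤ_[p]) - B) ∈ Ideal.span {(p : ℤ_[p]) ^ N}) : A ≡ B [MOD p ^ N] := by
  have h2 : ‖(((A : ℤ) - B : ℤ) : ℤ_[p])‖ ≤ (p : ℝ) ^ (-N : ℤ) := by
    rw [PadicInt.norm_le_pow_iff_mem_span_pow]
    push_cast
    exact h
  rw [PadicInt.norm_int_le_pow_iff_dvd] at h2
  have : (p ^ N : ℤ) ∣ (B : ℤ) - A := by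
    have := dvd_neg.mpr h2
    rwa [neg_sub] at this
  rw [Nat.modEq_iff_dvd]
  exact_mod_cast this

end Aux

section Iota

variable {p : ℕ} [hp : Fact p.Prime] (k : Type*) [Field k] [CharP k p]

/-- The map `a ↦ (1+X)^a`. -/
noncomputable def iota (a : ℤ_[p]) : PowerSeries k :=
  PowerSeries.mk fun n => ((a.appr (n + 1)).choose n : k)

variable {k}

lemma coeff_iota (a : ℤ_[p]) {n N : ℕ} (hN : n < N) :
    PowerSeries.coeff (R := k) n (iota k a) = ((a.appr N).choose n : k) := by
  rw [iota, PowerSeries.coeff_mk]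
  have h1 := PadicInt.appr_spec (n + 1) a
  have h2 : a - a.appr N ∈ Ideal.span {(p : ℤ_[p]) ^ (n + 1)} :=
    Ideal.span_singleton_le_span_singleton.2 (pow_dvd_pow _ hN) (PadicInt.appr_spec N a)
  have h3 : ((a.appr (n + 1) : ℤ_[p]) - a.appr N) ∈ Ideal.span {(p : ℤ_[p]) ^ (n + 1)} := by
    have := Ideal.sub_mem _ h2 h1
    convert this using 1
    ring
  exact choose_cast_eq (nat_modEq_of_mem_span h3) (lt_pow_of_lt (Nat.lt_succ_self n))

lemma coeff_one_add_X_pow_ps (m n : ℕ) :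
    PowerSeries.coeff (R := k) n ((1 + PowerSeries.X) ^ m) = (m.choose n : k) := by
  rw [show (1 + PowerSeries.X : PowerSeries k)
      = ((1 + Polynomial.X : Polynomial k) : PowerSeries k) by
    rw [Polynomial.coe_add, Polynomial.coe_one, Polynomial.coe_X],
    ← Polynomial.coe_pow, Polynomial.coeff_coe, Polynomial.coeff_one_add_X_pow]

lemma iota_natCast (m : ℕ) : iota k ((m : ℤ_[p])) = (1 + PowerSeries.X) ^ m := by
  ext n
  rw [coeff_iota _ (Nat.lt_succ_self n), coeff_one_add_X_pow_ps]
  have h3 : (((((m : ℤ_[p])).appr (n + 1) : ℕ) : ℤ_[p]) - (m : ℕ))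
      ∈ Ideal.span {(p : ℤ_[p]) ^ (n + 1)} := by
    have := neg_mem (PadicInt.appr_spec (n + 1) ((m : ℕ) : ℤ_[p]))
    rwa [neg_sub] at this
  exact choose_cast_eq (nat_modEq_of_mem_span h3) (lt_pow_of_lt (Nat.lt_succ_self n))

lemma iota_zero : iota k (0 : ℤ_[p]) = 1 := by
  simpa using iota_natCast (p := p) (k := k) 0

lemma iota_one : iota k (1 : ℤ_[p]) = 1 + PowerSeries.X := by
  simpa using iota_natCast (p := p) (k := k) 1

lemma iota_add (a b : ℤ_[p]) : iota k (a + b) = iota k a * iota k b := by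
  ext n
  rw [PowerSeries.coeff_mul, coeff_iota _ (Nat.lt_succ_self n)]
  have hmod : (a + b).appr (n + 1) ≡ a.appr (n + 1) + b.appr (n + 1) [MOD p ^ (n + 1)] := by
    apply nat_modEq_of_mem_span
    have h1 := PadicInt.appr_spec (n + 1) (a + b)
    have h2 := PadicInt.appr_spec (n + 1) a
    have h3 := PadicInt.appr_spec (n + 1) b
    have := Ideal.add_mem _ (Ideal.add_mem _ h2 h3) (neg_mem h1)
    convert this using 1
    push_cast
    ring
  rw [choose_cast_eq hmod (lt_pow_of_lt (Nat.lt_succ_self n))]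
  rw [show (((a.appr (n + 1) + b.appr (n + 1)).choose n : k))
      = ((∑ ij ∈ Finset.HasAntidiagonal.antidiagonal n,
          (a.appr (n + 1)).choose ij.1 * (b.appr (n + 1)).choose ij.2 : ℕ) : k) by
    rw [Nat.add_choose_eq]]
  push_cast
  refine Finset.sum_congr rfl fun ij hij => ?_
  rw [Finset.HasAntidiagonal.mem_antidiagonal] at hij
  rw [coeff_iota a (show ij.1 < n + 1 by omega), coeff_iota b (show ij.2 < n + 1 by omega)]

lemma iota_locallyConstant (n : ℕ) :
    IsLocallyConstant fun a : ℤ_[p] => PowerSeries.coeff (R := k) n (iota k a) := by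
  rw [IsLocallyConstant.iff_exists_open]
  intro a
  refine ⟨Metric.ball a ((p : ℝ) ^ (-(n + 1) : ℤ)), Metric.isOpen_ball,
    Metric.mem_ball_self (zpow_pos (by exact_mod_cast hp.out.pos) _), fun b hb => ?_⟩
  have hmem : b - a ∈ Ideal.span {(p : ℤ_[p]) ^ (n + 1)} := by
    rw [← PadicInt.norm_le_pow_iff_mem_span_pow]
    rw [Metric.mem_ball, dist_eq_norm] at hb
    exact_mod_cast hb.le
  show PowerSeries.coeff (R := k) n (iota k b) = PowerSeries.coeff (R := k) n (iota k a)
  rw [coeff_iota b (Nat.lt_succ_self n), coeff_iota a (Nat.lt_succ_self n)]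
  refine choose_cast_eq (p := p) ?_ (lt_pow_of_lt (Nat.lt_succ_self n))
  apply nat_modEq_of_mem_span
  have h1 := PadicInt.appr_spec (n + 1) a
  have h2 := PadicInt.appr_spec (n + 1) b
  have := Ideal.add_mem _ (Ideal.add_mem _ (neg_mem h2) hmem) h1
  convert this using 1
  ring

end Iota

section Unique

variable {p : ℕ} [hp : Fact p.Prime] {k : Type*} [Field k] [CharP k p]

lemma isUnit_one_add_X : IsUnit (1 + PowerSeries.X : PowerSeries k) := by
  rw [PowerSeries.isUnit_iff_constantCoeff]
  simp

lemma iota_unique (ι : ℤ_[p] → PowerSeries k)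
    (h1 : ∀ a b : ℤ_[p], ι (a + b) = ι a * ι b)
    (h2 : ι 1 = 1 + PowerSeries.X)
    (h3 : ∀ n : ℕ, IsLocallyConstant fun a : ℤ_[p] => PowerSeries.coeff (R := k) n (ι a)) :
    ι = iota k := by
  have hzero : ι 0 = 1 := by
    have := h1 0 1
    rw [zero_add] at this
    have hu : IsUnit (ι 1) := h2 ▸ isUnit_one_add_X
    have : ι 0 * ι 1 = 1 * ι 1 := by rw [one_mul, ← this]
    exact hu.mul_right_cancel this
  have hnat : ∀ m : ℕ, ι ((m : ℤ_[p])) = (1 + PowerSeries.X) ^ m := by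
    intro m
    induction m with
    | zero => simpa using hzero
    | succ m ih =>
      have : ((m + 1 : ℕ) : ℤ_[p]) = (m : ℤ_[p]) + 1 := by push_cast; ring
      rw [this, h1, ih, h2, pow_succ]
  funext a
  ext n
  obtain ⟨U, hU, haU, hUc⟩ := (h3 n).exists_open a
  obtain ⟨V, hV, haV, hVc⟩ := (iota_locallyConstant (p := p) (k := k) n).exists_open a
  obtain ⟨m, hm⟩ := PadicInt.denseRange_natCast.exists_mem_open (hU.inter hV)
    ⟨a, haU, haV⟩
  calc PowerSeries.coeff (R := k) n (ι a) = PowerSeries.coeff (R := k) n (ι ((m : ℤ_[p]))) :=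
        (hUc _ hm.1).symm
    _ = PowerSeries.coeff (R := k) n ((1 + PowerSeries.X) ^ m) := by rw [hnat]
    _ = PowerSeries.coeff (R := k) n (iota k ((m : ℤ_[p]))) := by rw [iota_natCast]
    _ = PowerSeries.coeff (R := k) n (iota k a) := hVc _ hm.2

lemma iota_isUnit (a : ℤ_[p]) : IsUnit (iota k a) :=
  IsUnit.of_mul_eq_one _ (by rw [← iota_add, add_neg_cancel, iota_zero])

lemma dvd_of_iota_eq_one {d : ℤ_[p]} (h : iota k d = 1) : (p : ℤ_[p]) ∣ d := by
  have hc : PowerSeries.coeff (R := k) 1 (iota k d) = ((d.appr 2 : ℕ) : k) := by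
    rw [coeff_iota d (by norm_num : (1:ℕ) < 2), Nat.choose_one_right]
  rw [h] at hc
  have h0 : ((d.appr 2 : ℕ) : k) = 0 := by
    rw [← hc]; simp
  have hdvd : p ∣ d.appr 2 := (CharP.cast_eq_zero_iff k p _).mp h0
  have hspec := PadicInt.appr_spec 2 d
  rw [Ideal.mem_span_singleton] at hspec
  obtain ⟨c, hc2⟩ := hspec
  obtain ⟨e, he⟩ := hdvd
  have : d = (d.appr 2 : ℤ_[p]) + (p : ℤ_[p]) ^ 2 * c := by rw [← hc2]; ring
  rw [this, he]
  push_cast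
  exact dvd_add (dvd_mul_right _ _) (dvd_mul_of_dvd_left (dvd_pow_self _ two_ne_zero) _)

lemma iota_nsmul (m : ℕ) (d : ℤ_[p]) : iota k ((m : ℤ_[p]) * d) = (iota k d) ^ m := by
  induction m with
  | zero => simpa using iota_zero
  | succ m ih =>
    have : ((m + 1 : ℕ) : ℤ_[p]) * d = (m : ℤ_[p]) * d + d := by push_cast; ring
    rw [this, iota_add, ih, pow_succ]

lemma eq_zero_of_iota_eq_one {c : ℤ_[p]} (h : iota k c = 1) : c = 0 := by
  haveI : CharP (PowerSeries k) p :=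
    charP_of_injective_ringHom (PowerSeries.C_injective (R := k)) p
  have key : ∀ n : ℕ, (p : ℤ_[p]) ^ n ∣ c := by
    intro n
    induction n with
    | zero => simp
    | succ n ih =>
      obtain ⟨d, hd⟩ := ih
      have hpow : (iota k d) ^ (p ^ n) = 1 := by
        rw [← iota_nsmul]
        have h2 : ((p ^ n : ℕ) : ℤ_[p]) * d = c := by rw [hd]; push_cast; ring
        rw [h2, h]
      have hd1 : iota k d = 1 := by
        have hsub : (iota k d - 1) ^ (p ^ n) = 0 := by
          rw [sub_pow_char_pow, hpow, one_pow, sub_self]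
        have := pow_eq_zero_iff (n := p ^ n) (pow_ne_zero n hp.out.ne_zero) |>.mp hsub
        linear_combination this
      obtain ⟨e, he⟩ := dvd_of_iota_eq_one hd1
      exact ⟨e, by rw [hd, he, pow_succ]; ring⟩
  have hnorm : ∀ n : ℕ, ‖c‖ ≤ ((p : ℝ)⁻¹) ^ n := by
    intro n
    have := (PadicInt.norm_le_pow_iff_mem_span_pow c n).mpr
      (Ideal.mem_span_singleton.mpr (key n))
    rwa [zpow_neg, zpow_natCast, ← inv_pow] at this
  have hp1 : (p : ℝ)⁻¹ < 1 := by
    rw [inv_lt_one_iff₀]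
    right
    exact_mod_cast hp.out.one_lt
  have htend : Filter.Tendsto (fun n : ℕ => ((p : ℝ)⁻¹) ^ n) Filter.atTop (nhds 0) :=
    tendsto_pow_atTop_nhds_zero_of_lt_one (by positivity) hp1
  have : ‖c‖ ≤ 0 := ge_of_tendsto' htend hnorm
  exact norm_le_zero_iff.mp this

lemma iota_injective : Function.Injective (fun a : ℤ_[p] => iota k a) := by
  intro a b hab
  simp only at hab
  have h1 : iota k (a - b) * iota k b = 1 * iota k b := by
    rw [← iota_add, sub_add_cancel, hab, one_mul]
  have h2 := (iota_isUnit (k := k) b).mul_right_cancel h1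
  exact sub_eq_zero.mp (eq_zero_of_iota_eq_one h2)

end Unique

/-- There is a unique map `ι : ℤ_p → k⟦X⟧` (written `a ↦ (1+X)^a`) such that
`ι(a+b) = ι(a)·ι(b)`, `ι(1) = 1+X`, and each coefficient map `a ↦ coeff n (ι a)` is
locally constant on `ℤ_p`; moreover any such `ι` takes values in the units of `k⟦X⟧`
and is injective. -/
theorem exists_unique_padic_exponential
    (p : ℕ) [Fact p.Prime] (k : Type*) [Field k] [Fintype k] [CharP k p] :
    (∃! ι : ℤ_[p] → PowerSeries k,
        (∀ a b : ℤ_[p], ι (a + b) = ι a * ι b) ∧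
        ι 1 = 1 + PowerSeries.X ∧
        (∀ n : ℕ, IsLocallyConstant fun a : ℤ_[p] => PowerSeries.coeff (R := k) n (ι a))) ∧
    (∀ ι : ℤ_[p] → PowerSeries k,
      ((∀ a b : ℤ_[p], ι (a + b) = ι a * ι b) ∧
        ι 1 = 1 + PowerSeries.X ∧
        (∀ n : ℕ, IsLocallyConstant fun a : ℤ_[p] => PowerSeries.coeff (R := k) n (ι a))) →
      (∀ a : ℤ_[p], IsUnit (ι a)) ∧ Function.Injective ι) := by
  constructor
  · exact ⟨iota k, ⟨iota_add, iota_one, iota_locallyConstant⟩,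
      fun ι ⟨h1, h2, h3⟩ => iota_unique ι h1 h2 h3⟩
  · rintro ι ⟨h1, h2, h3⟩
    have heq : ι = iota k := iota_unique ι h1 h2 h3
    subst heq
    exact ⟨fun a => iota_isUnit a, iota_injective⟩
end

section
/- The Amice transform 𝒜, which sends a measure ν on ℤ_p to the power series 𝒜(ν) = ∑_{n≥0} ν(c_n) X^n ∈ k[[X]], is a k-linear bijection from the space of measures on ℤ_p with values in k onto k[[X]]. -/
open PadicInt

section Amice

variable {p : ℕ} [hp : Fact p.Prime]

lemma toZModPow_eq_iff_norm (j : ℕ) (x y : ℤ_[p]) :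
    toZModPow j x = toZModPow j y ↔ ‖x - y‖ ≤ (p : ℝ) ^ (-j : ℤ) := by
  rw [norm_le_pow_iff_mem_span_pow, ← ker_toZModPow, RingHom.mem_ker, map_sub, sub_eq_zero]

lemma isLocallyConstant_toZModPow (j : ℕ) :
    IsLocallyConstant (toZModPow j : ℤ_[p] → ZMod (p ^ j)) := by
  rw [IsLocallyConstant.iff_exists_open]
  intro x
  refine ⟨Metric.ball x ((p : ℝ) ^ (-j + 1 : ℤ)), Metric.isOpen_ball, ?_, fun y hy => ?_⟩
  · refine Metric.mem_ball_self (zpow_pos ?_ _)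
    exact_mod_cast hp.out.pos
  · rw [toZModPow_eq_iff_norm, norm_le_pow_iff_norm_lt_pow_add_one]
    simpa [dist_eq_norm, neg_add_eq_sub] using hy

variable {k : Type*} [Field k] [Fintype k] [CharP k p]

/-- Pullback along `toZModPow j` as a linear map. -/
noncomputable def amiceEps (k : Type*) [Field k] (j : ℕ) :
    ((ZMod (p ^ j)) → k) →ₗ[k] LocallyConstant ℤ_[p] k where
  toFun g := ⟨g ∘ toZModPow j, (isLocallyConstant_toZModPow j).comp g⟩
  map_add' g g' := rfl
  map_smul' a g := rfl

@[simp] lemma amiceEps_apply (j : ℕ) (g : ZMod (p ^ j) → k) (x : ℤ_[p]) :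
    amiceEps k j g x = g (toZModPow j x) := rfl

end Amice

section Choose

variable {p : ℕ}

lemma choose_add_pow_cast (hp : p.Prime) (j n : ℕ) (hn : n < p ^ j) (m : ℕ) :
    ((m + p ^ j).choose n : ZMod p) = (m.choose n : ZMod p) := by
  rw [Nat.add_choose_eq]
  push_cast
  rw [Finset.sum_eq_single (n, 0)]
  · simp
  · rintro ⟨i, l⟩ hil hne
    rw [Finset.HasAntidiagonal.mem_antidiagonal] at hil
    have hl0 : l ≠ 0 := by rintro rfl; exact hne (by simp [← hil])
    have : (p : ZMod p) ∣ ((p ^ j).choose l : ZMod p) := by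
      have hlpj : l ≠ p ^ j := by omega
      obtain ⟨t, ht⟩ := hp.dvd_choose_pow hl0 hlpj
      exact ⟨t, by exact_mod_cast congrArg (Nat.cast : ℕ → ZMod p) ht⟩
    rcases this with ⟨t, ht⟩
    rw [ht]
    simp [ZMod.natCast_self]
  · intro h
    simp [Finset.HasAntidiagonal.mem_antidiagonal] at h

lemma choose_mod_cast (hp : p.Prime) (j n : ℕ) (hn : n < p ^ j) (m : ℕ) :
    ((m % p ^ j).choose n : ZMod p) = (m.choose n : ZMod p) := by
  conv_rhs => rw [← Nat.mod_add_div m (p ^ j)]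
  generalize m / p ^ j = q
  induction q with
  | zero => simp
  | succ t ih =>
      rw [Nat.mul_succ, ← add_assoc, choose_add_pow_cast hp j n hn, ih]

end Choose

section Main

variable {p : ℕ} [hp : Fact p.Prime] {k : Type*} [Field k] [Fintype k] [CharP k p]

lemma locallyConstant_ext_nat {f g : LocallyConstant ℤ_[p] k}
    (h : ∀ m : ℕ, f (m : ℤ_[p]) = g (m : ℤ_[p])) : f = g := by
  letI : TopologicalSpace k := ⊥
  haveI : DiscreteTopology k := ⟨rfl⟩
  ext x
  exact congrFun (PadicInt.denseRange_natCast.equalizer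
    f.isLocallyConstant.continuous g.isLocallyConstant.continuous (funext fun m => h m)) x

lemma c_eq_eps (c : ℕ → LocallyConstant ℤ_[p] k)
    (hc : ∀ n m : ℕ, c n (m : ℤ_[p]) = (m.choose n : k)) (j n : ℕ) (hn : n < p ^ j) :
    c n = amiceEps k j (fun a => ((a.val).choose n : k)) := by
  haveI : NeZero (p ^ j) := ⟨pow_ne_zero j hp.out.ne_zero⟩
  apply locallyConstant_ext_nat
  intro m
  rw [hc]
  simp only [amiceEps_apply, map_natCast, ZMod.val_natCast]
  have h2 := congrArg (ZMod.castHom (dvd_refl p) k) (choose_mod_cast hp.out j n hn m)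
  simpa using h2.symm

lemma exists_factor (f : LocallyConstant ℤ_[p] k) :
    ∃ j : ℕ, ∀ x y : ℤ_[p], toZModPow j x = toZModPow j y → f x = f y := by
  obtain ⟨δ, hδ, hball⟩ := lebesgue_number_lemma_of_metric (isCompact_univ (X := ℤ_[p]))
    (fun z : ℤ_[p] => f.isLocallyConstant.isOpen_fiber (f z))
    (fun x _ => Set.mem_iUnion.2 ⟨x, rfl⟩)
  obtain ⟨j, hj⟩ : ∃ j : ℕ, ((p : ℝ)⁻¹) ^ j < δ := by
    refine exists_pow_lt_of_lt_one hδ ?_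
    rw [inv_lt_one_iff₀]
    right
    exact_mod_cast hp.out.one_lt
  refine ⟨j, fun x y hxy => ?_⟩
  obtain ⟨z, hz⟩ := hball x (Set.mem_univ x)
  have hy : y ∈ Metric.ball x δ := by
    rw [Metric.mem_ball, dist_eq_norm]
    calc ‖y - x‖ ≤ (p : ℝ) ^ (-j : ℤ) := (toZModPow_eq_iff_norm j y x).1 hxy.symm
    _ = ((p : ℝ)⁻¹) ^ j := by rw [zpow_neg, zpow_natCast, inv_pow]
    _ < δ := hj
  have h1 : f x = f z := hz (Metric.mem_ball_self hδ)
  have h2 : f y = f z := hz hy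
  rw [h1, h2]

lemma eq_eps_of_factor (f : LocallyConstant ℤ_[p] k) (j : ℕ)
    (hf : ∀ x y : ℤ_[p], toZModPow j x = toZModPow j y → f x = f y) :
    f = amiceEps k j (fun a => f ((a.val : ℕ) : ℤ_[p])) := by
  haveI : NeZero (p ^ j) := ⟨pow_ne_zero j hp.out.ne_zero⟩
  ext x
  simp only [amiceEps_apply]
  refine hf _ _ ?_
  rw [map_natCast]
  exact (ZMod.natCast_rightInverse (toZModPow j x)).symm

lemma eps_injective (j : ℕ) : Function.Injective (amiceEps (p := p) k j) := by
  haveI : NeZero (p ^ j) := ⟨pow_ne_zero j hp.out.ne_zero⟩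
  intro g g' h
  funext a
  have := congrArg (fun F : LocallyConstant ℤ_[p] k => F ((a.val : ℕ) : ℤ_[p])) h
  simpa [ZMod.natCast_rightInverse a] using this

lemma c_li (c : ℕ → LocallyConstant ℤ_[p] k)
    (hc : ∀ n m : ℕ, c n (m : ℤ_[p]) = (m.choose n : k)) : LinearIndependent k c := by
  rw [linearIndependent_iff']
  intro s a hsum n
  induction n using Nat.strong_induction_on with
  | _ n ih =>
    intro hn
    have h := congrArg (LocallyConstant.evalₗ k ((n : ℕ) : ℤ_[p])) hsum
    rw [map_sum, map_zero] at h
    simp only [map_smul, LocallyConstant.evalₗ_apply, smul_eq_mul, hc] at h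
    rw [Finset.sum_eq_single n] at h
    · simpa using h
    · intro i hi hne
      rcases lt_or_gt_of_ne hne with hlt | hgt
      · rw [ih i hlt hi, zero_mul]
      · rw [Nat.choose_eq_zero_of_lt hgt]
        simp
    · intro hns
      exact absurd hn hns

lemma c_span (c : ℕ → LocallyConstant ℤ_[p] k)
    (hc : ∀ n m : ℕ, c n (m : ℤ_[p]) = (m.choose n : k)) :
    ⊤ ≤ Submodule.span k (Set.range c) := by
  intro f _
  obtain ⟨j, hj⟩ := exists_factor f
  haveI : NeZero (p ^ j) := ⟨pow_ne_zero j hp.out.ne_zero⟩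
  have hf : f ∈ LinearMap.range (amiceEps (p := p) k j) :=
    ⟨_, (eq_eps_of_factor f j hj).symm⟩
  have hle : Submodule.span k (Set.range (fun i : Fin (p ^ j) => c i)) ≤
      LinearMap.range (amiceEps (p := p) k j) := by
    rw [Submodule.span_le]
    rintro _ ⟨i, rfl⟩
    exact ⟨_, (c_eq_eps c hc j i i.isLt).symm⟩
  have heq : Submodule.span k (Set.range (fun i : Fin (p ^ j) => c i)) =
      LinearMap.range (amiceEps (p := p) k j) := by
    apply Submodule.eq_of_le_of_finrank_le hle
    have hcard := finrank_span_eq_card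
      ((c_li c hc).comp (Fin.val : Fin (p ^ j) → ℕ) Fin.val_injective)
    rw [Set.range_comp] at hcard
    rw [LinearMap.finrank_range_of_inj (eps_injective j)]
    rw [show (Set.range fun i : Fin (p ^ j) => c ↑i) = c '' Set.range (Fin.val) from
      Set.range_comp c Fin.val, hcard]
    simp [Module.finrank_pi, ZMod.card]
  rw [← heq] at hf
  refine Submodule.span_mono ?_ hf
  rintro _ ⟨i, rfl⟩
  exact ⟨i, rfl⟩

end Main

/-- The Amice transform `ν ↦ 𝒜(ν) = ∑_n ν(c_n) Xⁿ` is a `k`-linear bijection from the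
space of `k`-valued measures on `ℤ_p` (i.e. `k`-linear functionals on the space of
locally constant functions `ℤ_p → k`) onto `k⟦X⟧`. Here `c_n : ℤ_p → k` is the unique
locally constant function with `c_n(m) = C(m,n) mod p` (viewed in `k`) for all `m : ℕ`. -/
theorem amice_transform_bijective
    (p : ℕ) [Fact p.Prime] (k : Type*) [Field k] [Fintype k] [CharP k p]
    (c : ℕ → LocallyConstant ℤ_[p] k)
    (hc : ∀ (n m : ℕ), c n (m : ℤ_[p]) = (m.choose n : k)) :
    Function.Bijective
      (fun ν : Module.Dual k (LocallyConstant ℤ_[p] k) =>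
        PowerSeries.mk fun n => ν (c n)) ∧
    IsLinearMap k
      (fun ν : Module.Dual k (LocallyConstant ℤ_[p] k) =>
        PowerSeries.mk fun n => ν (c n)) := by
  let b : Module.Basis ℕ k (LocallyConstant ℤ_[p] k) := Module.Basis.mk (c_li c hc) (c_span c hc)
  have hb : ∀ n, b n = c n := fun n => Module.Basis.mk_apply _ _ n
  refine ⟨⟨?_, ?_⟩, ?_⟩
  · intro ν₁ ν₂ h
    apply b.ext
    intro n
    have := congrArg (PowerSeries.coeff n) h
    simpa [PowerSeries.coeff_mk, hb] using this
  · intro F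
    refine ⟨b.constr k (fun n => PowerSeries.coeff n F), ?_⟩
    ext n
    simp only [PowerSeries.coeff_mk, ← hb, Module.Basis.constr_basis]
  · constructor
    · intro ν ν'
      ext n
      simp
    · intro a ν
      ext n
      simp
end

section
/- Let ν be a measure on ℤ_p with values in k. (1) If φ_*ν denotes the measure defined by (φ_*ν)(f) = ν(z ↦ f(p·z)), then 𝒜(φ_*ν) = 𝒜(ν)(X^p), i.e. the Amice transform of φ_*ν is obtained from that of ν by replacing X by (1+X)^p − 1 = X^p. (2) If ψ_*ν denotes the measure defined by (ψ_*ν)(f) = ν(g), where g(z) = f(z/p) for z ∈ pℤ_p and g(z) = 0 otherwise, then 𝒜(ψ_*ν) = ψ(𝒜(ν)). -/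
open PowerSeries

section AmiceAux
variable {p : ℕ} [Fact p.Prime] {k : Type*} [Field k] [CharP k p]

/-- Lucas' theorem cast into `k`. -/
lemma amice_lucas_k (m n : ℕ) : ((m.choose n : ℕ) : k) =
    ((m % p).choose (n % p) : k) * ((m / p).choose (n / p) : k) := by
  have h := (Choose.choose_modEq_choose_mod_mul_choose_div_nat (n := m) (k := n) (p := p))
  have := (CharP.natCast_eq_natCast k p).mpr h
  push_cast at this
  exact this

/-- Approximate any point by a natural number where a locally constant function takes
the same value. -/
lemma amice_exists_nat_approx {α : Type*} (f : ℤ_[p] → α) (hf : IsLocallyConstant f)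
    (z : ℤ_[p]) : ∃ m : ℕ, ‖(m : ℤ_[p]) - z‖ < 1 ∧ f m = f z := by
  have hU : IsOpen (f ⁻¹' {f z}) := hf _
  obtain ⟨ε, hε, hball⟩ := Metric.isOpen_iff.mp hU z rfl
  obtain ⟨m, hm⟩ := PadicInt.denseRange_natCast.exists_dist_lt z (lt_min hε one_pos)
  refine ⟨m, ?_, ?_⟩
  · rw [← dist_eq_norm, dist_comm]; exact hm.trans_le (min_le_right _ _)
  · exact hball (by rw [Metric.mem_ball, dist_comm]; exact hm.trans_le (min_le_left _ _))

end AmiceAux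

section SubstAux
variable {p : ℕ} {k : Type*} [Field k]

lemma coeff_substXp (N : ℕ) (g : PowerSeries k) :
    PowerSeries.coeff N (substXp p g) =
      if p ∣ N then PowerSeries.coeff (N / p) g else 0 :=
  PowerSeries.coeff_mk _ _

lemma substXp_smul (a : k) (g : PowerSeries k) :
    substXp p (a • g) = a • substXp p g := by
  ext N
  simp only [substXp, PowerSeries.coeff_mk, map_smul, smul_eq_mul]
  split <;> simp

lemma substXp_sum {ι : Type*} (s : Finset ι) (g : ι → PowerSeries k) :
    substXp p (∑ i ∈ s, g i) = ∑ i ∈ s, substXp p (g i) := by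
  ext N
  simp only [substXp, PowerSeries.coeff_mk, map_sum, Finset.sum_apply]
  split <;> simp

end SubstAux

/-- Let `ν` be a `k`-valued measure on `ℤ_p` (a linear functional on locally constant
functions), let `c_n` be the locally constant binomial functions, and let
`𝒜(ν) = ∑ ν(c_n) Xⁿ` be the Amice transform.  (1) If `μφ = φ_*ν` is the measure
`f ↦ ν(z ↦ f(p·z))`, then `𝒜(μφ) = 𝒜(ν)(X^p)`.  (2) If `μψ = ψ_*ν` is the measure
`f ↦ ν(g)` where `g(z) = f(z/p)` on `pℤ_p` and `g = 0` elsewhere, then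
`𝒜(μψ) = ψ(𝒜(ν))`, where `ψ : k⟦X⟧ → k⟦X⟧` sends `∑_{i<p} (1+X)^i g_i(X^p)` to `g_0`. -/
theorem amice_transform_phi_psi
    (p : ℕ) (hp : p.Prime) [Fact p.Prime] (k : Type*) [Field k] [Fintype k] [CharP k p]
    (c : ℕ → LocallyConstant ℤ_[p] k)
    (hc : ∀ (n m : ℕ), c n (m : ℤ_[p]) = (m.choose n : k))
    (ψ : PowerSeries k → PowerSeries k)
    (hψ : ∀ (f : PowerSeries k) (g : Fin p → PowerSeries k),
      f = ∑ i : Fin p, (1 + PowerSeries.X) ^ (i : ℕ) * substXp p (g i) → ψ f = g ⟨0, hp.pos⟩)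
    (ν : Module.Dual k (LocallyConstant ℤ_[p] k)) :
    (∀ μφ : Module.Dual k (LocallyConstant ℤ_[p] k),
      (∀ f g : LocallyConstant ℤ_[p] k, (∀ z : ℤ_[p], g z = f ((p : ℤ_[p]) * z)) → μφ f = ν g) →
      (PowerSeries.mk fun n => μφ (c n)) = substXp p (PowerSeries.mk fun n => ν (c n))) ∧
    (∀ μψ : Module.Dual k (LocallyConstant ℤ_[p] k),
      (∀ f g : LocallyConstant ℤ_[p] k,
        (∀ z : ℤ_[p], g ((p : ℤ_[p]) * z) = f z) →
        (∀ z : ℤ_[p], (¬ ∃ w : ℤ_[p], z = (p : ℤ_[p]) * w) → g z = 0) →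
        μψ f = ν g) →
      (PowerSeries.mk fun n => μψ (c n)) = ψ (PowerSeries.mk fun n => ν (c n))) := by
  have hp0 : 0 < p := hp.pos
  constructor
  · -- Part (1)
    intro μφ hμφ
    ext N
    rw [PowerSeries.coeff_mk, coeff_substXp]
    by_cases hd : p ∣ N
    · rw [if_pos hd, PowerSeries.coeff_mk]
      refine hμφ (c N) (c (N / p)) fun z => ?_
      have hlc : IsLocallyConstant
          (fun z : ℤ_[p] => (c (N / p) z, c N ((p : ℤ_[p]) * z))) :=
        (c (N / p)).isLocallyConstant.prodMk
          ((c N).isLocallyConstant.comp_continuous (continuous_const.mul continuous_id))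
      obtain ⟨m, -, hm⟩ := amice_exists_nat_approx _ hlc z
      simp only [Prod.mk.injEq] at hm
      rw [← hm.1, ← hm.2]
      have hcast : ((p : ℤ_[p]) * (m : ℕ)) = ((p * m : ℕ) : ℤ_[p]) := by push_cast; ring
      rw [hcast, hc, hc]
      obtain ⟨t, rfl⟩ := hd
      rw [Nat.mul_div_cancel_left t hp0]
      have : (((p * m).choose (p * t) : ℕ) : k) = ((m.choose t : ℕ) : k) := by
        rw [amice_lucas_k (p := p), Nat.mul_mod_right, Nat.mul_mod_right,
          Nat.mul_div_cancel_left _ hp0, Nat.mul_div_cancel_left _ hp0,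
          Nat.choose_self, Nat.cast_one, one_mul]
      exact_mod_cast this.symm
    · rw [if_neg hd]
      rw [hμφ (c N) 0 fun z => ?_, map_zero]
      have hlc : IsLocallyConstant (fun z : ℤ_[p] => c N ((p : ℤ_[p]) * z)) :=
        (c N).isLocallyConstant.comp_continuous (continuous_const.mul continuous_id)
      obtain ⟨m, -, hm⟩ := amice_exists_nat_approx _ hlc z
      have hcast : ((p : ℤ_[p]) * (m : ℕ)) = ((p * m : ℕ) : ℤ_[p]) := by push_cast; ring
      show (0 : k) = _
      rw [← hm, hcast, hc]
      have hN0 : N % p ≠ 0 := fun h => hd (Nat.dvd_of_mod_eq_zero h)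
      have : (((p * m).choose N : ℕ) : k) = 0 := by
        rw [amice_lucas_k (p := p), Nat.mul_mod_right,
          Nat.choose_eq_zero_of_lt (Nat.pos_of_ne_zero hN0), Nat.cast_zero, zero_mul]
      exact_mod_cast this.symm
  · -- Part (2)
    intro μψ hμψ
    -- helper: applying a finite sum of locally constant functions pointwise
    have coe_sum : ∀ (s : Finset ℕ) (F : ℕ → LocallyConstant ℤ_[p] k) (x : ℤ_[p]),
        (∑ r ∈ s, F r) x = ∑ r ∈ s, F r x := by
      intro s F x
      induction s using Finset.cons_induction with
      | empty => simp
      | cons a s ha ih => rw [Finset.sum_cons, Finset.sum_cons, LocallyConstant.add_apply, ih]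
    -- the coefficients of the left-hand side
    have key : ∀ n : ℕ, μψ (c n) =
        ∑ r ∈ Finset.range p, (-1 : k) ^ r * ν (c (p * n + r)) := by
      intro n
      set gLC : LocallyConstant ℤ_[p] k :=
        ∑ r ∈ Finset.range p, ((-1 : k) ^ r) • c (p * n + r) with hgLC
      have gLC_apply : ∀ x : ℤ_[p], gLC x =
          ∑ r ∈ Finset.range p, (-1 : k) ^ r * c (p * n + r) x := by
        intro x
        rw [hgLC, coe_sum]
        refine Finset.sum_congr rfl fun r hr => ?_
        simp [smul_eq_mul]
      have h1 : ∀ z : ℤ_[p], gLC ((p : ℤ_[p]) * z) = c n z := by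
        intro z
        have hlc : IsLocallyConstant
            (fun z : ℤ_[p] => (gLC ((p : ℤ_[p]) * z), c n z)) :=
          (gLC.isLocallyConstant.comp_continuous
            (continuous_const.mul continuous_id)).prodMk (c n).isLocallyConstant
        obtain ⟨m, -, hm⟩ := amice_exists_nat_approx _ hlc z
        simp only [Prod.mk.injEq] at hm
        rw [← hm.1, ← hm.2]
        have hcast : ((p : ℤ_[p]) * (m : ℕ)) = ((p * m : ℕ) : ℤ_[p]) := by push_cast; ring
        rw [hcast, gLC_apply, hc]
        rw [Finset.sum_eq_single 0]
        · rw [hc, pow_zero, one_mul]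
          have : (((p * m).choose (p * n + 0) : ℕ) : k) = ((m.choose n : ℕ) : k) := by
            rw [Nat.add_zero, amice_lucas_k (p := p), Nat.mul_mod_right, Nat.mul_mod_right,
              Nat.mul_div_cancel_left _ hp0, Nat.mul_div_cancel_left _ hp0, Nat.choose_self,
              Nat.cast_one, one_mul]
          exact_mod_cast this
        · intro r hr hr0
          rw [hc]
          have hmod : (p * n + r) % p = r := by
            rw [Nat.add_comm, Nat.add_mul_mod_self_left,
              Nat.mod_eq_of_lt (Finset.mem_range.mp hr)]
          have : (((p * m).choose (p * n + r) : ℕ) : k) = 0 := by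
            rw [amice_lucas_k (p := p), Nat.mul_mod_right, hmod,
              Nat.choose_eq_zero_of_lt (Nat.pos_of_ne_zero hr0), Nat.cast_zero, zero_mul]
          rw [show (((p * m).choose (p * n + r) : ℕ) : k) = 0 from this, mul_zero]
        · intro hcon; exact absurd (Finset.mem_range.mpr hp0) hcon
      have h2 : ∀ z : ℤ_[p], (¬ ∃ w : ℤ_[p], z = (p : ℤ_[p]) * w) → gLC z = 0 := by
        intro z hz
        obtain ⟨m, hnear, hm⟩ := amice_exists_nat_approx (⇑gLC) gLC.isLocallyConstant z
        rw [← hm]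
        have hdvd : (p : ℤ_[p]) ∣ ((m : ℤ_[p]) - z) := (PadicInt.norm_lt_one_iff_dvd _).mp hnear
        have hpm : ¬ (p ∣ m) := by
          intro hdm
          have hd1 : (p : ℤ_[p]) ∣ (m : ℤ_[p]) := by exact_mod_cast Nat.cast_dvd_cast hdm
          have hd2 : (p : ℤ_[p]) ∣ z := by
            have hzz : z = (m : ℤ_[p]) - ((m : ℤ_[p]) - z) := by ring
            rw [hzz]; exact dvd_sub hd1 hdvd
          obtain ⟨w, hw⟩ := hd2
          exact hz ⟨w, hw⟩
        set s := m % p with hs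
        have hs0 : s ≠ 0 := fun h => hpm (Nat.dvd_of_mod_eq_zero h)
        have hsp : s < p := Nat.mod_lt _ hp0
        rw [gLC_apply]
        have hrw : ∀ r ∈ Finset.range p, (-1 : k) ^ r * c (p * n + r) ((m : ℕ) : ℤ_[p])
            = (((m / p).choose n : ℕ) : k) * ((-1 : k) ^ r * ((s.choose r : ℕ) : k)) := by
          intro r hr
          rw [hc]
          have hmod : (p * n + r) % p = r := by
            rw [Nat.add_comm, Nat.add_mul_mod_self_left,
              Nat.mod_eq_of_lt (Finset.mem_range.mp hr)]
          have hdiv : (p * n + r) / p = n := by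
            rw [Nat.mul_add_div hp0, Nat.div_eq_of_lt (Finset.mem_range.mp hr), Nat.add_zero]
          have hlk : ((m.choose (p * n + r) : ℕ) : k)
              = ((s.choose r : ℕ) : k) * (((m / p).choose n : ℕ) : k) := by
            rw [amice_lucas_k (p := p), hmod, hdiv]
          rw [show ((m.choose (p * n + r) : ℕ) : k)
              = ((s.choose r : ℕ) : k) * (((m / p).choose n : ℕ) : k) from hlk]
          ring
        rw [Finset.sum_congr rfl hrw, ← Finset.mul_sum]
        have halt : (∑ r ∈ Finset.range p, (-1 : k) ^ r * ((s.choose r : ℕ) : k)) = 0 := by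
          have hsub : Finset.range (s + 1) ⊆ Finset.range p := Finset.range_subset_range.mpr hsp
          rw [← Finset.sum_subset hsub (fun x hx hnx => by
            have hlt : s < x := by
              simpa [Finset.mem_range, Nat.lt_succ_iff, not_le] using hnx
            rw [Nat.choose_eq_zero_of_lt hlt, Nat.cast_zero, mul_zero])]
          have hint := Int.alternating_sum_range_choose_of_ne hs0
          have h2 := congrArg (Int.cast : ℤ → k) hint
          push_cast at h2
          exact h2
        rw [halt, mul_zero]
      rw [hμψ (c n) gLC h1 h2, hgLC, map_sum]
      refine Finset.sum_congr rfl fun r hr => ?_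
      rw [map_smul, smul_eq_mul]
    -- now the right-hand side
    set h : ℕ → PowerSeries k := fun r => PowerSeries.mk fun j => ν (c (p * j + r)) with hh
    set G : ℕ → PowerSeries k := fun i => ∑ r ∈ Finset.range p,
      ((-1 : k) ^ (r - i) * ((r.choose i : ℕ) : k)) • h r with hG
    have claim1 : (PowerSeries.mk fun n => ν (c n)) =
        ∑ r ∈ Finset.range p, PowerSeries.X ^ r * substXp p (h r) := by
      ext N
      rw [PowerSeries.coeff_mk, map_sum]
      rw [Finset.sum_eq_single (N % p)]
      · rw [PowerSeries.coeff_X_pow_mul', if_pos (Nat.mod_le N p), coeff_substXp]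
        have hNsub : N - N % p = p * (N / p) :=
          Nat.sub_eq_of_eq_add (Nat.div_add_mod N p).symm
        rw [hNsub, if_pos (Dvd.intro _ rfl), Nat.mul_div_cancel_left _ hp0, hh,
          PowerSeries.coeff_mk, Nat.div_add_mod]
      · intro r hr hne
        rw [PowerSeries.coeff_X_pow_mul']
        split_ifs with hle
        · rw [coeff_substXp, if_neg]
          intro hdvd
          apply hne
          obtain ⟨t, ht⟩ := hdvd
          have hrlt : r < p := Finset.mem_range.mp hr
          have hN : N = r + p * t := by omega
          rw [hN, Nat.add_mul_mod_self_left, Nat.mod_eq_of_lt hrlt]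
        · rfl
      · intro hcon; exact absurd (Finset.mem_range.mpr (Nat.mod_lt _ hp0)) hcon
    have claim2 : ∀ r < p, (PowerSeries.X : PowerSeries k) ^ r =
        ∑ i ∈ Finset.range p,
          ((-1 : k) ^ (r - i) * ((r.choose i : ℕ) : k)) • (1 + PowerSeries.X) ^ i := by
      intro r hr
      have hsub : Finset.range (r + 1) ⊆ Finset.range p := Finset.range_subset_range.mpr hr
      rw [← Finset.sum_subset hsub (fun x hx hnx => by
        have hlt : r < x := by simpa [Finset.mem_range, Nat.lt_succ_iff, not_le] using hnx
        rw [Nat.choose_eq_zero_of_lt hlt, Nat.cast_zero, mul_zero, zero_smul])]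
      have hadd := add_pow (1 + PowerSeries.X : PowerSeries k) (-1) r
      rw [show ((1 + PowerSeries.X : PowerSeries k) + -1) = PowerSeries.X from by ring] at hadd
      rw [hadd]
      refine Finset.sum_congr rfl fun i hi => ?_
      rw [PowerSeries.smul_eq_C_mul, map_mul, map_pow, map_neg, map_one, map_natCast]
      ring
    have hdec : (PowerSeries.mk fun n => ν (c n)) =
        ∑ i : Fin p, (1 + PowerSeries.X) ^ (i : ℕ) * substXp p (G (i : ℕ)) := by
      rw [claim1,
        Finset.sum_congr rfl fun r hr => by rw [claim2 r (Finset.mem_range.mp hr)]]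
      simp only [Finset.sum_mul, smul_mul_assoc]
      rw [Finset.sum_comm,
        Fin.sum_univ_eq_sum_range (fun i => (1 + PowerSeries.X) ^ i * substXp p (G i)) p]
      refine Finset.sum_congr rfl fun i hi => ?_
      rw [hG]
      simp only []
      rw [substXp_sum, Finset.mul_sum]
      refine Finset.sum_congr rfl fun r hr => ?_
      rw [substXp_smul, mul_smul_comm]
    rw [hψ _ (fun i => G (i : ℕ)) hdec]
    ext n
    rw [PowerSeries.coeff_mk, key n, hG]
    simp only []
    rw [map_sum]
    refine Finset.sum_congr rfl fun r hr => ?_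
    rw [map_smul, smul_eq_mul, hh, PowerSeries.coeff_mk]
    simp
end

section
/- Let ν be a measure on ℤ_p with values in k. (1) For b ∈ ℤ_p, if ν_b denotes the measure defined by ν_b(f) = ν(z ↦ f(z+b)), then 𝒜(ν_b) = ι(b)·𝒜(ν). (2) For a ∈ ℤ_p^×, if ν^{(a)} denotes the measure defined by ν^{(a)}(f) = ν(z ↦ f(a·z)), then 𝒜(ν^{(a)}) is the power series obtained by substituting ι(a) − 1 (a power series with zero constant term) for X in 𝒜(ν). -/
open PowerSeries Finset

private lemma coeff_one_add_X_pow' (k : Type*) [Field k] (n m : ℕ) :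
    PowerSeries.coeff n ((1 + PowerSeries.X : PowerSeries k) ^ m) = (m.choose n : k) := by
  have h : ((((1 + Polynomial.X : Polynomial k)) ^ m : Polynomial k) : PowerSeries k)
      = (1 + PowerSeries.X : PowerSeries k) ^ m := by
    push_cast
    simp [Polynomial.coe_add, Polynomial.coe_one, Polynomial.coe_X]
  rw [← h, Polynomial.coeff_coe, Polynomial.coeff_one_add_X_pow]

private lemma locConst_ext (p : ℕ) [Fact p.Prime] {k : Type*} (f g : ℤ_[p] → k)
    (hf : IsLocallyConstant f) (hg : IsLocallyConstant g)
    (h : ∀ m : ℕ, f (m : ℤ_[p]) = g (m : ℤ_[p])) : f = g := by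
  have hd : Dense (Set.range (Nat.cast : ℕ → ℤ_[p])) := PadicInt.denseRange_natCast
  have hpair := hf.prodMk hg
  have hcl : IsClosed {z : ℤ_[p] | f z = g z} := by
    rw [← isOpen_compl_iff]
    exact hpair {q : k × k | q.1 ≠ q.2}
  have hdense : Dense {z : ℤ_[p] | f z = g z} :=
    hd.mono (by rintro _ ⟨m, rfl⟩; exact h m)
  funext z
  have : {z : ℤ_[p] | f z = g z} = Set.univ := by
    rw [← hcl.closure_eq, hdense.closure_eq]
  exact Set.eq_univ_iff_forall.mp this z

/-- Substitution of a power series `g` with zero constant term into `f`: the coefficient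
of `Xⁿ` in `f(g)` is `∑_{m ≤ n} (coeff m f) · (coeff n of gᵐ)`. -/
noncomputable def pscomp {k : Type*} [Field k] (f g : PowerSeries k) : PowerSeries k :=
  PowerSeries.mk fun n =>
    ∑ m ∈ Finset.range (n + 1), PowerSeries.coeff m f * PowerSeries.coeff n (g ^ m)

/-- Let `ν` be a `k`-valued measure on `ℤ_p`, with Amice transform `𝒜(ν) = ∑ ν(c_n) Xⁿ`,
and let `ι : ℤ_p → k⟦X⟧`, `a ↦ (1+X)^a`, be the unique map with `ι(a+b) = ι(a)ι(b)`,
`ι(1) = 1+X` and locally constant coefficients. (1) For `b ∈ ℤ_p`, if `ν_b` is the measure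
`f ↦ ν(z ↦ f(z+b))`, then `𝒜(ν_b) = (1+X)^b · 𝒜(ν)`.  (2) For `a ∈ ℤ_p^×`, if `ν⁽ᵃ⁾` is
the measure `f ↦ ν(z ↦ f(a·z))`, then `𝒜(ν⁽ᵃ⁾)` is obtained by substituting the
constant-term-free power series `(1+X)^a - 1` for `X` in `𝒜(ν)`. -/
theorem amice_transform_translation_dilation
    (p : ℕ) [Fact p.Prime] (k : Type*) [Field k] [Fintype k] [CharP k p]
    (c : ℕ → LocallyConstant ℤ_[p] k)
    (hc : ∀ (n m : ℕ), c n (m : ℤ_[p]) = (m.choose n : k))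
    (ι : ℤ_[p] → PowerSeries k)
    (hι_add : ∀ a b : ℤ_[p], ι (a + b) = ι a * ι b)
    (hι_one : ι 1 = 1 + PowerSeries.X)
    (hι_lc : ∀ n : ℕ, IsLocallyConstant fun a : ℤ_[p] => PowerSeries.coeff n (ι a))
    (ν : Module.Dual k (LocallyConstant ℤ_[p] k)) :
    (∀ (b : ℤ_[p]) (νb : Module.Dual k (LocallyConstant ℤ_[p] k)),
      (∀ f g : LocallyConstant ℤ_[p] k, (∀ z : ℤ_[p], g z = f (z + b)) → νb f = ν g) →
      (PowerSeries.mk fun n => νb (c n)) = ι b * PowerSeries.mk fun n => ν (c n)) ∧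
    (∀ (a : ℤ_[p]ˣ) (νa : Module.Dual k (LocallyConstant ℤ_[p] k)),
      (∀ f g : LocallyConstant ℤ_[p] k, (∀ z : ℤ_[p], g z = f ((a : ℤ_[p]) * z)) → νa f = ν g) →
      (PowerSeries.mk fun n => νa (c n)) =
        pscomp (PowerSeries.mk fun n => ν (c n)) (ι (a : ℤ_[p]) - 1)) := by
  have hone_ne : (1 + PowerSeries.X : PowerSeries k) ≠ 0 := by
    intro h
    simpa using congrArg (PowerSeries.coeff 0) h
  have hι_zero : ι 0 = 1 := by
    have h := hι_add 1 0
    rw [add_zero] at h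
    refine mul_left_cancel₀ (hι_one ▸ hone_ne) ?_
    rw [← h, mul_one]
  have hι_nat : ∀ m : ℕ, ι (m : ℤ_[p]) = (1 + PowerSeries.X) ^ m := by
    intro m
    induction m with
    | zero => simpa using hι_zero
    | succ m ih =>
      push_cast
      rw [hι_add, ih, hι_one, pow_succ]
  have hkey : ∀ (n : ℕ) (z : ℤ_[p]), PowerSeries.coeff n (ι z) = c n z := by
    intro n
    have := locConst_ext p (fun z : ℤ_[p] => PowerSeries.coeff n (ι z)) (fun z => c n z)
      (hι_lc n) (c n).isLocallyConstant
      (fun m => by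
        show PowerSeries.coeff n (ι (m : ℤ_[p])) = c n (m : ℤ_[p])
        rw [hι_nat m, coeff_one_add_X_pow', hc])
    exact fun z => congrFun this z
  constructor
  · -- translation
    intro b νb hνb
    ext n
    rw [PowerSeries.coeff_mk, PowerSeries.coeff_mul]
    set g : LocallyConstant ℤ_[p] k :=
      ∑ ij ∈ Finset.HasAntidiagonal.antidiagonal n, PowerSeries.coeff ij.1 (ι b) • c ij.2 with hgdef
    have hg : ∀ z : ℤ_[p], g z = c n (z + b) := by
      intro z
      rw [← hkey n (z + b), hι_add, mul_comm, PowerSeries.coeff_mul, hgdef]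
      have hco : ⇑(∑ ij ∈ Finset.HasAntidiagonal.antidiagonal n, PowerSeries.coeff ij.1 (ι b) • c ij.2)
          = ∑ ij ∈ Finset.HasAntidiagonal.antidiagonal n, ⇑(PowerSeries.coeff ij.1 (ι b) • c ij.2) :=
        map_sum (LocallyConstant.coeFnₗ k) _ _
      rw [hco]
      simp only [Finset.sum_apply, LocallyConstant.coe_smul, Pi.smul_apply, smul_eq_mul]
      exact Finset.sum_congr rfl fun ij _ => by simp [hkey]
    rw [hνb (c n) g hg, hgdef, map_sum]
    refine Finset.sum_congr rfl fun ij _ => ?_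
    rw [map_smul, smul_eq_mul, PowerSeries.coeff_mk]
  · -- dilation
    intro a νa hνa
    ext n
    rw [PowerSeries.coeff_mk]
    have hconst0 : PowerSeries.coeff 0 (ι (a : ℤ_[p])) = 1 := by
      have := locConst_ext p (fun z : ℤ_[p] => PowerSeries.coeff 0 (ι z)) (fun _ => 1)
        (hι_lc 0) (IsLocallyConstant.const 1)
        (fun m => by
          show PowerSeries.coeff 0 (ι (m : ℤ_[p])) = 1
          rw [hι_nat m, coeff_one_add_X_pow']; simp)
      exact congrFun this (a : ℤ_[p])
    have hconst : PowerSeries.constantCoeff (ι (a : ℤ_[p]) - 1) = 0 := by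
      rw [← PowerSeries.coeff_zero_eq_constantCoeff, map_sub, hconst0]
      simp
    have hvanish : ∀ j : ℕ, n < j → PowerSeries.coeff n ((ι (a : ℤ_[p]) - 1) ^ j) = 0 := by
      intro j hj
      have hdvd : (PowerSeries.X : PowerSeries k) ^ j ∣ (ι (a : ℤ_[p]) - 1) ^ j :=
        pow_dvd_pow_of_dvd (PowerSeries.X_dvd_iff.mpr hconst) j
      exact (PowerSeries.X_pow_dvd_iff.mp hdvd) n hj
    set q : PowerSeries k := ι (a : ℤ_[p]) - 1 with hq
    set g : LocallyConstant ℤ_[p] k :=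
      ∑ m ∈ Finset.range (n + 1), PowerSeries.coeff n (q ^ m) • c m with hgdef
    have hg : ∀ z : ℤ_[p], g z = c n ((a : ℤ_[p]) * z) := by
      have hlcr : IsLocallyConstant fun z : ℤ_[p] => c n ((a : ℤ_[p]) * z) :=
        (c n).isLocallyConstant.comp_continuous (by continuity)
      have heq := locConst_ext p (fun z : ℤ_[p] => g z) (fun z => c n ((a : ℤ_[p]) * z))
        g.isLocallyConstant hlcr ?_
      · exact fun z => congrFun heq z
      intro m
      show g ((m : ℕ) : ℤ_[p]) = c n ((a : ℤ_[p]) * (m : ℤ_[p]))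
      have hιam : ι ((a : ℤ_[p]) * (m : ℤ_[p])) = (ι (a : ℤ_[p])) ^ m := by
        induction m with
        | zero => simpa using hι_zero
        | succ m ih =>
          push_cast
          rw [mul_add, mul_one, hι_add, pow_succ]
          push_cast at ih
          rw [ih]
      have hbig : c n ((a : ℤ_[p]) * (m : ℤ_[p]))
          = ∑ j ∈ Finset.range (m + 1), (m.choose j : k) * PowerSeries.coeff n (q ^ j) := by
        rw [← hkey n, hιam]
        have h1 : (ι (a : ℤ_[p])) ^ m = (q + 1) ^ m := by rw [hq]; ring_nf
        rw [h1, add_pow, map_sum]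
        refine Finset.sum_congr rfl fun j hj => ?_
        rw [one_pow, mul_one, ← map_natCast (PowerSeries.C) (m.choose j),
          PowerSeries.coeff_mul_C, mul_comm]
      -- g at m : ∑_{j≤n} coeff n (q^j) * choose m j
      have hgm : g ((m : ℕ) : ℤ_[p])
          = ∑ j ∈ Finset.range (n + 1), PowerSeries.coeff n (q ^ j) * (m.choose j : k) := by
        rw [hgdef]
        have hco : ⇑(∑ j ∈ Finset.range (n + 1), PowerSeries.coeff n (q ^ j) • c j)
            = ∑ j ∈ Finset.range (n + 1), ⇑(PowerSeries.coeff n (q ^ j) • c j) :=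
          map_sum (LocallyConstant.coeFnₗ k) _ _
        rw [hco]
        simp only [Finset.sum_apply, LocallyConstant.coe_smul, Pi.smul_apply, smul_eq_mul]
        exact Finset.sum_congr rfl fun j _ => by rw [hc]
      rw [hgm, hbig]
      -- compare the two sums
      rw [Finset.sum_congr rfl (fun j _ => mul_comm (PowerSeries.coeff n (q ^ j)) _)]
      rcases le_total m n with hmn | hnm
      · -- range (m+1) ⊆ range (n+1); extra terms have choose m j = 0
        rw [← Finset.sum_subset (Finset.range_subset_range.mpr (by omega) :
            Finset.range (m + 1) ⊆ Finset.range (n + 1))]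
        intro j hj hj'
        rw [Nat.choose_eq_zero_of_lt (by simp only [Finset.mem_range] at hj hj'; omega),
          Nat.cast_zero, zero_mul]
      · -- range (n+1) ⊆ range (m+1); extra terms have coeff n (q^j) = 0
        rw [Finset.sum_subset (Finset.range_subset_range.mpr (by omega) :
            Finset.range (n + 1) ⊆ Finset.range (m + 1))]
        intro j hj hj'
        rw [hvanish j (by simp only [Finset.mem_range] at hj hj'; omega), mul_zero]
    rw [hνa (c n) g hg, hgdef, map_sum, pscomp, PowerSeries.coeff_mk]
    refine Finset.sum_congr rfl fun m _ => ?_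
    rw [map_smul, smul_eq_mul, PowerSeries.coeff_mk, mul_comm]
end

section
/- The representation π_{χ_1,χ_2} of B(ℚ_p) on LC_c(ℚ_p, k) is irreducible: every k-subspace U of LC_c(ℚ_p, k) with π_{χ_1,χ_2}(g) U ⊆ U for all g ∈ B(ℚ_p) is either 0 or all of LC_c(ℚ_p, k). -/
open Metric

section Aux
variable {p : ℕ} [Fact p.Prime] {k : Type*} [Field k]

/-- indicator of the closed ball of center `c`, radius `r`, with values in `k`. -/
noncomputable def ind (k : Type*) [One k] [Zero k] {p : ℕ} [Fact p.Prime] (c : ℚ_[p]) (r : ℝ) :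
    ℚ_[p] → k := fun x => if ‖x - c‖ ≤ r then 1 else 0

lemma hpR0 : (0:ℝ) < (p:ℕ) := by exact_mod_cast (Fact.out : p.Prime).pos

lemma hpR1 : (1:ℝ) < (p:ℕ) := by exact_mod_cast (Fact.out : p.Prime).one_lt

lemma hpQ0 : ((p:ℚ_[p])) ≠ 0 := by exact_mod_cast (Fact.out : p.Prime).ne_zero

lemma norm_sub_eq_left {x y : ℚ_[p]} (h : ‖y‖ < ‖x‖) : ‖x - y‖ = ‖x‖ := by
  rw [sub_eq_add_neg, Padic.add_eq_max_of_ne (by rw [norm_neg]; exact h.ne'),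
    norm_neg, max_eq_left h.le]

lemma norm_pnegm (m : ℕ) : ‖(p:ℚ_[p]) ^ (-(m:ℤ))‖ = (p:ℝ) ^ (m:ℤ) := by
  rw [Padic.norm_p_zpow, neg_neg]

lemma exists_nat_approx (x : ℚ_[p]) (hx : ‖x‖ ≤ 1) (N : ℕ) :
    ∃ j : ℕ, ‖x - (j : ℚ_[p])‖ ≤ (p:ℝ) ^ (-(N:ℤ)) := by
  set z : ℤ_[p] := ⟨x, hx⟩ with hz
  refine ⟨z.appr N, ?_⟩
  have h := PadicInt.appr_spec N z
  rw [← PadicInt.norm_le_pow_iff_mem_span_pow] at h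
  have : ((z - (z.appr N : ℤ_[p]) : ℤ_[p]) : ℚ_[p]) = x - (z.appr N : ℚ_[p]) := by
    exact (PadicInt.coe_sub z _).trans (congrArg (fun t => (z:ℚ_[p]) - t) (PadicInt.coe_natCast _))
  rwa [PadicInt.norm_def, this] at h

lemma exists_approx (m n : ℕ) (x : ℚ_[p]) (hx : ‖x‖ ≤ (p:ℝ) ^ (m:ℤ)) :
    ∃ j : ℕ, j < p ^ (m + n) ∧
      ‖x - (j : ℚ_[p]) * (p:ℚ_[p]) ^ (-(m:ℤ))‖ ≤ (p:ℝ) ^ (-(n:ℤ)) := by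
  have hpR : (0:ℝ) < p := hpR0
  have hy : ‖x * (p:ℚ_[p]) ^ (m:ℤ)‖ ≤ 1 := by
    rw [norm_mul, Padic.norm_p_zpow]
    calc ‖x‖ * (p:ℝ) ^ (-(m:ℤ)) ≤ (p:ℝ) ^ (m:ℤ) * (p:ℝ) ^ (-(m:ℤ)) := by
          apply mul_le_mul_of_nonneg_right hx (zpow_nonneg hpR.le _)
      _ = 1 := by rw [← zpow_add₀ hpR.ne']; simp
  obtain ⟨j0, hj0⟩ := exists_nat_approx (x * (p:ℚ_[p]) ^ (m:ℤ)) hy (m + n)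
  refine ⟨j0 % p ^ (m + n), Nat.mod_lt _ (pow_pos (Fact.out : p.Prime).pos _), ?_⟩
  have hsplit : x - ((j0 % p ^ (m + n) : ℕ) : ℚ_[p]) * (p:ℚ_[p]) ^ (-(m:ℤ))
      = (x * (p:ℚ_[p]) ^ (m:ℤ) - (j0:ℚ_[p])) * (p:ℚ_[p]) ^ (-(m:ℤ))
        + ((j0 / p ^ (m + n) : ℕ) : ℚ_[p]) * (p:ℚ_[p]) ^ (n:ℤ) := by
    have h1 : (j0 : ℚ_[p]) = ((j0 % p ^ (m + n) : ℕ) : ℚ_[p])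
        + ((p:ℚ_[p]) ^ (m + n : ℕ)) * ((j0 / p ^ (m + n) : ℕ) : ℚ_[p]) := by
      rw [← Nat.cast_pow, ← Nat.cast_mul, ← Nat.cast_add, Nat.mod_add_div]
    have h2 : ((p:ℚ_[p]) ^ (m + n : ℕ)) * (p:ℚ_[p]) ^ (-(m:ℤ)) = (p:ℚ_[p]) ^ (n:ℤ) := by
      rw [← zpow_natCast (p:ℚ_[p]) (m+n), ← zpow_add₀ hpQ0]
      congr 1; push_cast; ring
    have h3 : (p:ℚ_[p]) ^ (m:ℤ) * (p:ℚ_[p]) ^ (-(m:ℤ)) = 1 := by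
      rw [← zpow_add₀ hpQ0]; simp
    calc x - ((j0 % p ^ (m + n) : ℕ) : ℚ_[p]) * (p:ℚ_[p]) ^ (-(m:ℤ))
        = x * ((p:ℚ_[p]) ^ (m:ℤ) * (p:ℚ_[p]) ^ (-(m:ℤ)))
          - ((j0:ℚ_[p]) - ((p:ℚ_[p]) ^ (m + n : ℕ)) * ((j0 / p ^ (m + n) : ℕ) : ℚ_[p]))
            * (p:ℚ_[p]) ^ (-(m:ℤ)) := by
          rw [h3, mul_one]
          congr 2
          rw [h1]; ring
      _ = (x * (p:ℚ_[p]) ^ (m:ℤ) - (j0:ℚ_[p])) * (p:ℚ_[p]) ^ (-(m:ℤ))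
          + ((j0 / p ^ (m + n) : ℕ) : ℚ_[p]) * ((p:ℚ_[p]) ^ (m + n : ℕ) * (p:ℚ_[p]) ^ (-(m:ℤ))) := by
          ring
      _ = _ := by rw [h2]
  rw [hsplit]
  refine le_trans (Padic.nonarchimedean _ _) (max_le ?_ ?_)
  · rw [norm_mul, norm_pnegm]
    have : (p:ℝ) ^ (-(n:ℤ)) = (p:ℝ) ^ (-((m+n:ℕ):ℤ)) * (p:ℝ) ^ (m:ℤ) := by
      rw [← zpow_add₀ hpR.ne']; congr 1; push_cast; ring
    rw [this]
    exact mul_le_mul_of_nonneg_right hj0 (zpow_nonneg hpR.le _)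
  · rw [norm_mul, Padic.norm_p_zpow]
    calc ‖((j0 / p ^ (m + n) : ℕ) : ℚ_[p])‖ * (p:ℝ) ^ (-(n:ℤ))
        ≤ 1 * (p:ℝ) ^ (-(n:ℤ)) := by
          apply mul_le_mul_of_nonneg_right _ (zpow_nonneg hpR.le _)
          exact_mod_cast Padic.norm_int_le_one ((j0 / p ^ (m + n) : ℕ) : ℤ)
      _ = (p:ℝ) ^ (-(n:ℤ)) := one_mul _

lemma approx_unique (m n : ℕ) {x : ℚ_[p]} {i j : ℕ}
    (hi : i < p ^ (m + n)) (hj : j < p ^ (m + n))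
    (h1 : ‖x - (i : ℚ_[p]) * (p:ℚ_[p]) ^ (-(m:ℤ))‖ ≤ (p:ℝ) ^ (-(n:ℤ)))
    (h2 : ‖x - (j : ℚ_[p]) * (p:ℚ_[p]) ^ (-(m:ℤ))‖ ≤ (p:ℝ) ^ (-(n:ℤ))) : i = j := by
  have hpR : (0:ℝ) < p := hpR0
  have hd : ‖((i:ℚ_[p]) - (j:ℚ_[p])) * (p:ℚ_[p]) ^ (-(m:ℤ))‖ ≤ (p:ℝ) ^ (-(n:ℤ)) := by
    have : ((i:ℚ_[p]) - (j:ℚ_[p])) * (p:ℚ_[p]) ^ (-(m:ℤ))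
        = (x - (j : ℚ_[p]) * (p:ℚ_[p]) ^ (-(m:ℤ))) + -(x - (i : ℚ_[p]) * (p:ℚ_[p]) ^ (-(m:ℤ))) := by
      ring
    rw [this]
    exact le_trans (Padic.nonarchimedean _ _) (max_le h2 (by rwa [norm_neg]))
  rw [norm_mul, norm_pnegm] at hd
  have hd2 : ‖(((i:ℤ) - (j:ℤ) : ℤ) : ℚ_[p])‖ ≤ (p:ℝ) ^ (-((m+n:ℕ):ℤ)) := by
    have hpm : (0:ℝ) < (p:ℝ) ^ (m:ℤ) := zpow_pos hpR _
    rw [← mul_le_mul_iff_left₀ hpm]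
    calc ‖(((i:ℤ) - (j:ℤ) : ℤ) : ℚ_[p])‖ * (p:ℝ) ^ (m:ℤ) ≤ (p:ℝ) ^ (-(n:ℤ)) := by
          push_cast at hd ⊢; exact hd
      _ = (p:ℝ) ^ (-((m+n:ℕ):ℤ)) * (p:ℝ) ^ (m:ℤ) := by
          rw [← zpow_add₀ hpR.ne']; congr 1; push_cast; ring
  rw [Padic.norm_int_le_pow_iff_dvd] at hd2
  have := Int.eq_zero_of_abs_lt_dvd hd2 (by
    have hc : ((p:ℤ) ^ (m+n)) = ((p ^ (m+n) : ℕ) : ℤ) := by push_cast; ring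
    rw [hc, abs_sub_lt_iff]
    constructor <;> [skip; skip] <;> push_cast <;> omega)
  omega

end Aux

section Key
variable {p : ℕ} [Fact p.Prime] {k : Type*} [Field k] [CharP k p]

/-- translation by `b` as a linear endomorphism of `ℚ_[p] → k`. -/
noncomputable def transl (k : Type*) [Field k] {p : ℕ} [Fact p.Prime] (b : ℚ_[p]) :
    Module.End k (ℚ_[p] → k) where
  toFun f := fun x => f (x - b)
  map_add' f g := rfl
  map_smul' c f := rfl

lemma transl_apply (b : ℚ_[p]) (f : ℚ_[p] → k) (x : ℚ_[p]) :
    transl k b f x = f (x - b) := rfl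

instance endCharP : CharP (Module.End k (ℚ_[p] → k)) p := by
  have : Nontrivial (Module.End k (ℚ_[p] → k)) := by
    refine ⟨0, 1, fun h => ?_⟩
    have := congrFun (LinearMap.congr_fun h (fun _ => (1:k))) 0
    simp at this
  exact charP_of_injective_ringHom (algebraMap k (Module.End k (ℚ_[p] → k))).injective p

lemma indicator_mem (U : Submodule k (ℚ_[p] → k))
    (hT : ∀ f ∈ U, ∀ b : ℚ_[p], (fun x => f (x - b)) ∈ U)
    {f : ℚ_[p] → k} (hfU : f ∈ U) (hf0 : f ≠ 0)
    {m n : ℕ} (hlev : ∀ x y : ℚ_[p], ‖x - y‖ ≤ (p:ℝ) ^ (-(n:ℤ)) → f x = f y)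
    (hsupp : ∀ x : ℚ_[p], (p:ℝ) ^ (m:ℤ) < ‖x‖ → f x = 0) :
    (ind k 0 ((p:ℝ) ^ (m:ℤ))) ∈ U := by
  classical
  set t0 : ℚ_[p] := (p:ℚ_[p]) ^ (-(m:ℤ)) with ht0
  set T : Module.End k (ℚ_[p] → k) := transl k t0 with hTdef
  -- iterated translation
  have hTpow : ∀ (j : ℕ) (g : ℚ_[p] → k) (x : ℚ_[p]),
      (T ^ j) g x = g (x - (j:ℚ_[p]) * t0) := by
    intro j
    induction j with
    | zero => intro g x; simp
    | succ j ih =>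
      intro g x
      rw [pow_succ', Module.End.mul_apply, transl_apply, ih]
      congr 1
      push_cast
      ring
  -- (T-1)^q kills f
  have hq : ((T - 1) ^ (p ^ (m + n))) f = 0 := by
    have hcomm : (T - 1) ^ (p ^ (m + n)) = T ^ (p ^ (m + n)) - 1 := by
      have := sub_pow_char_pow_of_commute p (m + n) (Commute.one_right T)
      simpa using this
    rw [hcomm]
    have hTq : (T ^ (p ^ (m + n))) f = f := by
      funext x
      rw [hTpow]
      apply hlev
      have hc : ((p ^ (m + n) : ℕ) : ℚ_[p]) * t0 = (p:ℚ_[p]) ^ (n:ℤ) := by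
        rw [ht0]
        push_cast
        rw [← zpow_natCast (p:ℚ_[p]) (m+n), ← zpow_add₀ hpQ0]
        congr 1; push_cast; ring
      have : x - ((p ^ (m + n) : ℕ) : ℚ_[p]) * t0 - x = -((p:ℚ_[p]) ^ (n:ℤ)) := by
        rw [← hc]; ring
      rw [this, norm_neg, Padic.norm_p_zpow]
    rw [LinearMap.sub_apply, hTq, Module.End.one_apply, sub_self]
  -- basic closure properties of (T-1)^r f
  have hmemU : ∀ r : ℕ, ((T - 1) ^ r) f ∈ U := by
    intro r
    induction r with
    | zero => simpa using hfU
    | succ r ih =>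
      rw [pow_succ', Module.End.mul_apply]
      have h1 : (T (((T - 1) ^ r) f)) ∈ U := hT _ ih t0
      have : ((T - 1) : Module.End k (ℚ_[p] → k)) (((T - 1) ^ r) f)
          = T (((T - 1) ^ r) f) - ((T - 1) ^ r) f := by
        rw [LinearMap.sub_apply, Module.End.one_apply]
      rw [this]
      exact Submodule.sub_mem U h1 ih
  have hlevr : ∀ r : ℕ, ∀ x y : ℚ_[p], ‖x - y‖ ≤ (p:ℝ) ^ (-(n:ℤ)) →
      ((T - 1) ^ r) f x = ((T - 1) ^ r) f y := by
    intro r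
    induction r with
    | zero => simpa using hlev
    | succ r ih =>
      intro x y hxy
      rw [pow_succ', Module.End.mul_apply]
      have hrw : ∀ z : ℚ_[p], ((T - 1) : Module.End k (ℚ_[p] → k)) (((T - 1) ^ r) f) z
          = ((T - 1) ^ r) f (z - t0) - ((T - 1) ^ r) f z := by
        intro z
        rw [LinearMap.sub_apply, Module.End.one_apply, Pi.sub_apply, transl_apply]
      rw [hrw x, hrw y, ih _ _ hxy, ih (x - t0) (y - t0) (by
        have : x - t0 - (y - t0) = x - y := by ring
        rwa [this])]
  have hsuppr : ∀ r : ℕ, ∀ x : ℚ_[p], (p:ℝ) ^ (m:ℤ) < ‖x‖ → ((T - 1) ^ r) f x = 0 := by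
    intro r
    induction r with
    | zero => simpa using hsupp
    | succ r ih =>
      intro x hx
      rw [pow_succ', Module.End.mul_apply, LinearMap.sub_apply, Module.End.one_apply,
        Pi.sub_apply, transl_apply]
      have hxt : ‖x - t0‖ = ‖x‖ := by
        apply norm_sub_eq_left
        rw [ht0, norm_pnegm]
        exact hx
      rw [ih x hx, ih (x - t0) (by rwa [hxt]), sub_self]
  -- minimal r
  have hex : ∃ r : ℕ, ((T - 1) ^ r) f = 0 := ⟨p ^ (m + n), hq⟩
  set r1 := Nat.find hex with hr1
  have hr1pos : r1 ≠ 0 := by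
    intro h
    have := Nat.find_spec hex
    rw [← hr1, h] at this
    simp at this
    exact hf0 this
  set g : ℚ_[p] → k := ((T - 1) ^ (r1 - 1)) f with hg
  have hgne : g ≠ 0 := Nat.find_min hex (Nat.pred_lt hr1pos)
  have hgkill : ∀ x : ℚ_[p], g (x - t0) = g x := by
    intro x
    have h1 : ((T - 1) ^ r1) f = 0 := Nat.find_spec hex
    have h2 : ((T - 1) ^ r1) f = T g - g := by
      rw [hg, ← Nat.succ_pred_eq_of_pos (Nat.pos_of_ne_zero hr1pos), pow_succ',
        Module.End.mul_apply, LinearMap.sub_apply, Module.End.one_apply]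
      rfl
    have := congrFun (h2 ▸ h1).symm x
    rw [Pi.sub_apply, Pi.zero_apply, transl_apply] at this
    have := sub_eq_zero.mp this.symm
    exact this
  have hginv : ∀ (j : ℕ) (x : ℚ_[p]), g (x - (j:ℚ_[p]) * t0) = g x := by
    intro j
    induction j with
    | zero => intro x; simp
    | succ j ih =>
      intro x
      have : x - ((j:ℚ_[p]) + 1) * t0 = (x - t0) - (j:ℚ_[p]) * t0 := by ring
      push_cast
      rw [this, ih (x - t0), hgkill]
  have hglev : ∀ x y : ℚ_[p], ‖x - y‖ ≤ (p:ℝ) ^ (-(n:ℤ)) → g x = g y := hlevr (r1 - 1)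
  have hgsupp : ∀ x : ℚ_[p], (p:ℝ) ^ (m:ℤ) < ‖x‖ → g x = 0 := hsuppr (r1 - 1)
  have hgconst : ∀ x : ℚ_[p], ‖x‖ ≤ (p:ℝ) ^ (m:ℤ) → g x = g 0 := by
    intro x hx
    obtain ⟨j, _, hj⟩ := exists_approx m n x hx
    have h1 : g x = g ((j:ℚ_[p]) * t0) := hglev _ _ hj
    have h2 : g 0 = g ((j:ℚ_[p]) * t0) := by
      have := hginv j ((j:ℚ_[p]) * t0)
      rw [sub_self] at this
      exact this
    rw [h1, ← h2]
  have hg0 : g 0 ≠ 0 := by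
    obtain ⟨x0, hx0⟩ := Function.ne_iff.mp hgne
    simp only [Pi.zero_apply] at hx0
    by_cases hx : ‖x0‖ ≤ (p:ℝ) ^ (m:ℤ)
    · rw [← hgconst x0 hx]; exact hx0
    · exact absurd (hgsupp x0 (not_le.mp hx)) hx0
  have hindeq : (ind k (0:ℚ_[p]) ((p:ℝ) ^ (m:ℤ))) = (g 0)⁻¹ • g := by
    funext x
    rw [ind, Pi.smul_apply, smul_eq_mul]
    by_cases hx : ‖x - 0‖ ≤ (p:ℝ) ^ (m:ℤ)
    · rw [if_pos hx, hgconst x (by rwa [sub_zero] at hx), inv_mul_cancel₀ hg0]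
    · rw [if_neg hx, hgsupp x (not_le.mp (by rwa [sub_zero] at hx)), mul_zero]
  rw [hindeq]
  exact Submodule.smul_mem U _ (hmemU (r1 - 1))

end Key

section Aux2
variable {p : ℕ} [Fact p.Prime] {k : Type*} [Field k]

lemma uniform_of_LCc {f : ℚ_[p] → k} (hlc : IsLocallyConstant f) (hcs : HasCompactSupport f) :
    ∃ m n : ℕ, (∀ x y : ℚ_[p], ‖x - y‖ ≤ (p:ℝ) ^ (-(n:ℤ)) → f x = f y) ∧
      (∀ x : ℚ_[p], (p:ℝ) ^ (m:ℤ) < ‖x‖ → f x = 0) := by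
  have hpR : (1:ℝ) < p := by exact_mod_cast (Fact.out : p.Prime).one_lt
  -- support bound
  obtain ⟨R, hR⟩ := (hcs.isBounded).subset_closedBall 0
  obtain ⟨m, hm⟩ := pow_unbounded_of_one_lt R hpR
  have hsupp : ∀ x : ℚ_[p], (p:ℝ) ^ (m:ℤ) < ‖x‖ → f x = 0 := by
    intro x hx
    apply image_eq_zero_of_notMem_tsupport
    intro hxt
    have := hR hxt
    rw [mem_closedBall, dist_zero_right] at this
    have : ‖x‖ < (p:ℝ) ^ (m:ℤ) := lt_of_le_of_lt this (by rwa [zpow_natCast])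
    linarith
  -- compact ball
  have hK : IsCompact (closedBall (0:ℚ_[p]) ((p:ℝ) ^ (m:ℤ))) := isCompact_closedBall _ _
  choose ε hε hball using fun z : ℚ_[p] =>
    Metric.isOpen_iff.1 (hlc {f z}) z rfl
  obtain ⟨t, ht⟩ := hK.elim_finite_subcover (fun z : ℚ_[p] => ball z (ε z))
    (fun z => isOpen_ball) (fun x _ => Set.mem_iUnion.2 ⟨x, mem_ball_self (hε x)⟩)
  have h0K : (0:ℚ_[p]) ∈ closedBall (0:ℚ_[p]) ((p:ℝ) ^ (m:ℤ)) := by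
    simp [zpow_nonneg (le_of_lt (lt_trans one_pos hpR)) (m:ℤ)]
  have htne : t.Nonempty := by
    obtain ⟨_, hz⟩ := Set.mem_iUnion₂.1 (ht h0K)
    exact ⟨_, hz.1⟩
  set δ := t.inf' htne ε with hδ
  have hδ0 : 0 < δ := by
    rw [hδ, Finset.lt_inf'_iff]
    exact fun z _ => hε z
  obtain ⟨n, hn⟩ := exists_pow_lt_of_lt_one hδ0 (inv_lt_one_of_one_lt₀ hpR)
  have hpn : (p:ℝ) ^ (-(n:ℤ)) < δ := by
    rwa [zpow_neg, zpow_natCast, ← inv_pow]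
  have hpn1 : (p:ℝ) ^ (-(n:ℤ)) ≤ 1 := by
    apply zpow_le_one_of_nonpos₀ hpR.le
    omega
  have hpm1 : (1:ℝ) ≤ (p:ℝ) ^ (m:ℤ) := by
    apply one_le_zpow₀ hpR.le
    omega
  refine ⟨m, n, ?_, hsupp⟩
  intro x y hxy
  by_cases hx : ‖x‖ ≤ (p:ℝ) ^ (m:ℤ)
  · have hxK : x ∈ closedBall (0:ℚ_[p]) ((p:ℝ) ^ (m:ℤ)) := by
      rwa [mem_closedBall, dist_zero_right]
    obtain ⟨i, hit, hxi⟩ := Set.mem_iUnion₂.1 (ht hxK)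
    have hfx : f x = f i := hball i hxi
    have hyi : y ∈ ball i (ε i) := by
      rw [mem_ball] at hxi ⊢
      have h1 : dist y i = ‖(y - x) + (x - i)‖ := by rw [dist_eq_norm]; ring_nf
      have h2 : ‖y - x‖ < ε i := by
        rw [norm_sub_rev]
        exact lt_of_le_of_lt hxy (lt_of_lt_of_le hpn (Finset.inf'_le ε hit))
      have h3 : ‖x - i‖ < ε i := by rwa [dist_eq_norm] at hxi
      calc dist y i ≤ max ‖y - x‖ ‖x - i‖ := by rw [h1]; exact Padic.nonarchimedean _ _
        _ < ε i := max_lt h2 h3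
    have hfy : f y = f i := hball i hyi
    rw [hfx, hfy]
  · push_neg at hx
    have hxy2 : ‖x - y‖ < ‖x‖ := lt_of_le_of_lt hxy (lt_of_le_of_lt (hpn1.trans hpm1) hx)
    have hy : ‖y‖ = ‖x‖ := by
      have : y = x - (x - y) := by ring
      rw [this, norm_sub_eq_left hxy2]
    rw [hsupp x hx, hsupp y (by rw [hy]; exact hx)]

end Aux2

/-- The space `LC_c(ℚ_p, k)` of compactly supported locally constant functions
`ℚ_p → k`, as a set of functions. -/
def LCc (p : ℕ) [Fact p.Prime] (k : Type*) [Field k] : Set (ℚ_[p] → k) :=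
  {f | IsLocallyConstant f ∧ HasCompactSupport f}

/-- The action `π_{χ₁,χ₂}` of the element `g = [[a,b],[0,d]]` of the upper triangular
Borel subgroup `B(ℚ_p)` on functions `ℚ_p → k`:
`(π_{χ₁,χ₂}(g) f)(x) = χ₁(d) χ₂(a) f((d·x − b)/a)`. -/
noncomputable def piRep (p : ℕ) [Fact p.Prime] {k : Type*} [Field k] (χ₁ χ₂ : ℚ_[p]ˣ →* kˣ)
    (a d : ℚ_[p]ˣ) (b : ℚ_[p]) (f : ℚ_[p] → k) : ℚ_[p] → k :=
  fun x => (χ₁ d : k) * (χ₂ a : k) * f (((d : ℚ_[p]) * x - b) / (a : ℚ_[p]))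

section Final
variable {p : ℕ} [Fact p.Prime] {k : Type*} [Field k]

lemma ind_mem_all {χ₁ χ₂ : ℚ_[p]ˣ →* kˣ} (U : Submodule k (ℚ_[p] → k))
    (hstab : ∀ f ∈ U, ∀ (a d : ℚ_[p]ˣ) (b : ℚ_[p]), piRep p χ₁ χ₂ a d b f ∈ U)
    {m : ℕ} (hI : (ind k (0:ℚ_[p]) ((p:ℝ) ^ (m:ℤ))) ∈ U) (c : ℚ_[p]) (j : ℤ) :
    (ind k c ((p:ℝ) ^ j)) ∈ U := by
  set a : ℚ_[p]ˣ := Units.mk0 ((p:ℚ_[p]) ^ ((m:ℤ) - j)) (zpow_ne_zero _ hpQ0) with ha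
  have h1 := hstab _ hI a 1 c
  have hnorma : ‖(a : ℚ_[p])‖ = (p:ℝ) ^ (j - (m:ℤ)) := by
    rw [ha, Units.val_mk0, Padic.norm_p_zpow, neg_sub]
  have heq : (ind k c ((p:ℝ) ^ j))
      = ((χ₂ a : k))⁻¹ • piRep p χ₁ χ₂ a 1 c (ind k 0 ((p:ℝ) ^ (m:ℤ))) := by
    funext x
    rw [Pi.smul_apply, smul_eq_mul, piRep]
    simp only [map_one, Units.val_one, one_mul]
    rw [← mul_assoc, inv_mul_cancel₀ (by exact_mod_cast (χ₂ a).ne_zero), one_mul]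
    have hcond : ‖(x - c) / (a : ℚ_[p]) - 0‖ ≤ (p:ℝ) ^ (m:ℤ) ↔ ‖x - c‖ ≤ (p:ℝ) ^ j := by
      rw [sub_zero, norm_div, hnorma, div_le_iff₀ (zpow_pos hpR0 _),
        ← zpow_add₀ (ne_of_gt hpR0)]
      have : (m:ℤ) + (j - (m:ℤ)) = j := by ring
      rw [this]
    rw [ind, ind]
    exact if_congr hcond.symm rfl rfl
  rw [heq]
  exact Submodule.smul_mem U _ h1

lemma mem_of_inds (U : Submodule k (ℚ_[p] → k))
    (hind : ∀ (c : ℚ_[p]) (j : ℤ), (ind k c ((p:ℝ) ^ j)) ∈ U)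
    {h : ℚ_[p] → k} (hlc : IsLocallyConstant h) (hcs : HasCompactSupport h) : h ∈ U := by
  obtain ⟨m, n, hlev, hsupp⟩ := uniform_of_LCc hlc hcs
  set t0 : ℚ_[p] := (p:ℚ_[p]) ^ (-(m:ℤ)) with ht0
  have heq : h = ∑ j ∈ Finset.range (p ^ (m + n)),
      h ((j:ℚ_[p]) * t0) • ind k ((j:ℚ_[p]) * t0) ((p:ℝ) ^ (-(n:ℤ))) := by
    funext x
    rw [Finset.sum_apply]
    by_cases hx : ‖x‖ ≤ (p:ℝ) ^ (m:ℤ)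
    · obtain ⟨j0, hj0lt, hj0⟩ := exists_approx m n x hx
      rw [Finset.sum_eq_single j0 (fun j hj hne => by
          rw [Pi.smul_apply, ind, if_neg, smul_zero]
          intro hcon
          exact hne (approx_unique m n (Finset.mem_range.1 hj) hj0lt hcon hj0))
        (fun hj0mem => absurd (Finset.mem_range.2 hj0lt) hj0mem)]
      rw [Pi.smul_apply, ind, if_pos hj0, smul_eq_mul, mul_one]
      exact hlev x ((j0:ℚ_[p]) * t0) hj0
    · push_neg at hx
      rw [hsupp x hx, Finset.sum_eq_zero]
      intro j hj
      rw [Pi.smul_apply, ind, if_neg, smul_zero]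
      intro hcon
      have hjt : ‖(j:ℚ_[p]) * t0‖ ≤ (p:ℝ) ^ (m:ℤ) := by
        rw [norm_mul, ht0, norm_pnegm]
        have hj1 : ‖((j:ℤ) : ℚ_[p])‖ ≤ 1 := Padic.norm_int_le_one _
        have hj1' : ‖(j:ℚ_[p])‖ ≤ 1 := by exact_mod_cast hj1
        nlinarith [zpow_pos (hpR0 (p:=p)) (m:ℤ)]
      have hxx : ‖x - (j:ℚ_[p]) * t0‖ = ‖x‖ := norm_sub_eq_left (lt_of_le_of_lt hjt hx)
      rw [hxx] at hcon
      have h1 : (p:ℝ) ^ (-(n:ℤ)) ≤ (p:ℝ) ^ (m:ℤ) := by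
        apply zpow_le_zpow_right₀ hpR1.le
        omega
      linarith
  rw [heq]
  exact Submodule.sum_mem U fun j _ => Submodule.smul_mem U _ (hind _ _)

end Final

/-- The representation `π_{χ₁,χ₂}` of `B(ℚ_p)` on `LC_c(ℚ_p, k)` is irreducible: any
`k`-subspace `U ⊆ LC_c(ℚ_p, k)` stable under `π_{χ₁,χ₂}(g)` for all `g ∈ B(ℚ_p)` is
either `0` or all of `LC_c(ℚ_p, k)`. -/
theorem piRep_irreducible
    (p : ℕ) [Fact p.Prime] (k : Type*) [Field k] [Fintype k] [CharP k p]
    (χ₁ χ₂ : ℚ_[p]ˣ →* kˣ)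
    (hχ₁ : IsLocallyConstant fun u : ℚ_[p]ˣ => (χ₁ u : k))
    (hχ₂ : IsLocallyConstant fun u : ℚ_[p]ˣ => (χ₂ u : k))
    (U : Submodule k (ℚ_[p] → k)) (hU : (U : Set (ℚ_[p] → k)) ⊆ LCc p k)
    (hstab : ∀ f ∈ U, ∀ (a d : ℚ_[p]ˣ) (b : ℚ_[p]), piRep p χ₁ χ₂ a d b f ∈ U) :
    U = ⊥ ∨ (U : Set (ℚ_[p] → k)) = LCc p k := by
  by_cases hbot : U = ⊥
  · exact Or.inl hbot
  right
  obtain ⟨f, hfU, hf0⟩ := (Submodule.ne_bot_iff U).mp hbot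
  have hT : ∀ g ∈ U, ∀ b : ℚ_[p], (fun x => g (x - b)) ∈ U := by
    intro g hg b
    have h1 := hstab g hg 1 1 b
    have h2 : piRep p χ₁ χ₂ 1 1 b g = fun x => g (x - b) := by
      funext x
      rw [piRep]
      simp
    rwa [h2] at h1
  obtain ⟨hlc, hcs⟩ := hU hfU
  obtain ⟨m, n, hlev, hsupp⟩ := uniform_of_LCc hlc hcs
  have hI := indicator_mem U hT hfU hf0 hlev hsupp
  have hall := ind_mem_all U hstab hI
  apply Set.Subset.antisymm hU
  intro h hh
  exact mem_of_inds U hall hh.1 hh.2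
end

section
/- Let χ_1, χ_2, χ_1', χ_2' : ℚ_p^× → k^× be locally constant group homomorphisms, and let T : LC_c(ℚ_p, k) → LC_c(ℚ_p, k) be a nonzero k-linear map such that T ∘ π_{χ_1,χ_2}(g) = π_{χ_1',χ_2'}(g) ∘ T for all g ∈ B(ℚ_p). Then χ_1 = χ_1', χ_2 = χ_2', and T is multiplication by a nonzero scalar of k. -/
open Metric

section Aux

variable (p : ℕ) [Fact p.Prime]

lemma padic_one_lt_real : (1 : ℝ) < (p : ℝ) := by
  exact_mod_cast (Fact.out : p.Prime).one_lt

lemma padic_p_pos_real : (0 : ℝ) < (p : ℝ) := by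
  exact_mod_cast (Fact.out : p.Prime).pos

/-- The closed ball of radius `p^z` is open. -/
lemma padic_ball_isOpen (c : ℚ_[p]) (z : ℤ) :
    IsOpen {x : ℚ_[p] | ‖x - c‖ ≤ (p : ℝ) ^ z} := by
  have : {x : ℚ_[p] | ‖x - c‖ ≤ (p : ℝ) ^ z} = Metric.ball c ((p : ℝ) ^ (z + 1)) := by
    ext x
    simp only [Set.mem_setOf_eq, Metric.mem_ball, dist_eq_norm]
    exact Padic.norm_le_pow_iff_norm_lt_pow_add_one (x - c) z
  rw [this]
  exact Metric.isOpen_ball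

lemma padic_ball_isClosed (c : ℚ_[p]) (z : ℤ) :
    IsClosed {x : ℚ_[p] | ‖x - c‖ ≤ (p : ℝ) ^ z} := by
  have : {x : ℚ_[p] | ‖x - c‖ ≤ (p : ℝ) ^ z} = Metric.closedBall c ((p : ℝ) ^ z) := by
    ext x; simp [Metric.mem_closedBall, dist_eq_norm]
  rw [this]; exact Metric.isClosed_closedBall

end Aux

section Indic

variable (p : ℕ) [Fact p.Prime] (k : Type*) [Field k]

/-- The indicator function of the ball `{x | ‖x - c‖ ≤ p^z}`. -/
noncomputable def indic (c : ℚ_[p]) (z : ℤ) : ℚ_[p] → k :=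
  fun x => if ‖x - c‖ ≤ (p : ℝ) ^ z then 1 else 0

lemma indic_mem_LCc (c : ℚ_[p]) (z : ℤ) : indic p k c z ∈ LCc p k := by
  constructor
  · rw [IsLocallyConstant.iff_exists_open]
    intro x
    by_cases hx : ‖x - c‖ ≤ (p : ℝ) ^ z
    · refine ⟨_, padic_ball_isOpen p c z, hx, fun y hy => ?_⟩
      simp only [Set.mem_setOf_eq] at hy
      simp only [indic, if_pos hx, if_pos hy]
    · refine ⟨_, (padic_ball_isClosed p c z).isOpen_compl, hx, fun y hy => ?_⟩
      simp only [Set.mem_compl_iff, Set.mem_setOf_eq] at hy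
      simp only [indic, if_neg hx, if_neg hy]
  · apply HasCompactSupport.intro (isCompact_closedBall c ((p : ℝ) ^ z))
    intro x hx
    rw [Metric.mem_closedBall, dist_eq_norm] at hx
    simp only [indic, if_neg hx]

lemma indic_self (c : ℚ_[p]) (z : ℤ) : indic p k c z c = 1 := by
  simp only [indic, sub_self, norm_zero]
  rw [if_pos (zpow_pos (padic_p_pos_real p) z).le]

end Indic

section Closure

variable {p : ℕ} [Fact p.Prime] {k : Type*} [Field k]

/-- `LC_c` is stable under `x ↦ s • f((d x - b)/a)`. -/
lemma LCc_comp_affine {f : ℚ_[p] → k} (hf : f ∈ LCc p k) (s : k) (a d b : ℚ_[p])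
    (ha : a ≠ 0) (hd : d ≠ 0) :
    (fun x => s * f ((d * x - b) / a)) ∈ LCc p k := by
  obtain ⟨hlc, hcs⟩ := hf
  constructor
  · have : (fun x : ℚ_[p] => s * f ((d * x - b) / a)) =
        (fun y : k => s * y) ∘ (f ∘ fun x : ℚ_[p] => (d * x - b) / a) := rfl
    rw [this]
    exact (hlc.comp_continuous (by fun_prop)).comp _
  · apply HasCompactSupport.intro
      (hcs.image (by fun_prop : Continuous fun y : ℚ_[p] => (a * y + b) / d))
    intro x hx
    have hmem : (d * x - b) / a ∉ tsupport f := by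
      intro hy
      exact hx ⟨(d * x - b) / a, hy, by field_simp; ring⟩
    rw [image_eq_zero_of_notMem_tsupport hmem, mul_zero]

/-- Every compactly supported function vanishes outside a ball of radius `p^N`. -/
lemma LCc_supp_bound {f : ℚ_[p] → k} (hcs : HasCompactSupport f) :
    ∃ N : ℕ, ∀ x : ℚ_[p], ¬ ‖x‖ ≤ (p : ℝ) ^ (N : ℤ) → f x = 0 := by
  obtain ⟨R, hR⟩ := hcs.isBounded.subset_closedBall 0
  obtain ⟨N, hN⟩ := pow_unbounded_of_one_lt R (padic_one_lt_real p)
  refine ⟨N, fun x hx => ?_⟩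
  apply image_eq_zero_of_notMem_tsupport
  intro hmem
  have := hR hmem
  rw [Metric.mem_closedBall, dist_zero_right] at this
  apply hx
  calc ‖x‖ ≤ R := this
    _ ≤ (p : ℝ) ^ N := hN.le
    _ = (p : ℝ) ^ (N : ℤ) := (zpow_natCast _ _).symm

/-- A locally constant compactly supported function is uniformly locally constant. -/
lemma LCc_inv_scale {f : ℚ_[p] → k} (hlc : IsLocallyConstant f) (hcs : HasCompactSupport f) :
    ∃ m : ℕ, ∀ x y : ℚ_[p], ‖x - y‖ ≤ (p : ℝ) ^ (-(m : ℤ)) → f x = f y := by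
  have key : ∀ x : ℚ_[p], ∃ n : ℕ, ∀ y, ‖y - x‖ ≤ (p : ℝ) ^ (-(n : ℤ)) → f y = f x := by
    intro x
    obtain ⟨U, hU, hxU, hfU⟩ := hlc.exists_open x
    obtain ⟨ε, hε, hball⟩ := Metric.isOpen_iff.1 hU x hxU
    obtain ⟨n, hn⟩ := PadicInt.exists_pow_neg_lt p hε
    exact ⟨n, fun y hy => hfU y (hball (by rw [Metric.mem_ball, dist_eq_norm]; exact hy.trans_lt hn))⟩
  choose n hn using key
  set K := tsupport f with hK
  set B : ℚ_[p] → Set ℚ_[p] := fun x => {y | ‖y - x‖ ≤ (p : ℝ) ^ (-(n x : ℤ))} with hB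
  have hcover : K ⊆ ⋃ x : K, B x := by
    intro x hx
    exact Set.mem_iUnion.2 ⟨⟨x, hx⟩, by simp only [hB, Set.mem_setOf_eq, sub_self, norm_zero]; positivity⟩
  obtain ⟨t, ht⟩ := hcs.elim_finite_subcover (fun x : K => B x)
    (fun x => padic_ball_isOpen p x _) hcover
  set m : ℕ := t.sup fun x => n x with hm
  refine ⟨m, fun x y hxy => ?_⟩
  have hstep : ∀ i : K, i ∈ t → ∀ u v : ℚ_[p], ‖u - v‖ ≤ (p : ℝ) ^ (-(m : ℤ)) →
      u ∈ B (i : ℚ_[p]) → v ∈ B (i : ℚ_[p]) := by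
    intro i hi u v huv hu
    have hpow : (p : ℝ) ^ (-(m : ℤ)) ≤ (p : ℝ) ^ (-(n i : ℤ)) := by
      apply zpow_le_zpow_right₀ (padic_one_lt_real p).le
      have : n (i : ℚ_[p]) ≤ m := Finset.le_sup (f := fun x : K => n (x : ℚ_[p])) hi
      omega
    have : ‖v - (i : ℚ_[p])‖ ≤ max ‖v - u‖ ‖u - (i : ℚ_[p])‖ := by
      have := Padic.nonarchimedean (v - u) (u - (i : ℚ_[p]))
      simpa using this
    refine le_trans this (max_le ?_ hu)
    rw [norm_sub_rev]
    exact huv.trans hpow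
  by_cases hx : ∃ i ∈ t, x ∈ B (i : ℚ_[p])
  · obtain ⟨i, hi, hxi⟩ := hx
    have hyi : y ∈ B (i : ℚ_[p]) := hstep i hi x y hxy hxi
    rw [hn _ x hxi, hn _ y hyi]
  · by_cases hy : ∃ i ∈ t, y ∈ B (i : ℚ_[p])
    · obtain ⟨i, hi, hyi⟩ := hy
      have hxi : x ∈ B (i : ℚ_[p]) := hstep i hi y x (by rwa [norm_sub_rev]) hyi
      rw [hn _ x hxi, hn _ y hyi]
    · have hxK : x ∉ K := fun h => hx (by simpa using Set.mem_iUnion.1 (ht h))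
      have hyK : y ∉ K := fun h => hy (by simpa using Set.mem_iUnion.1 (ht h))
      rw [image_eq_zero_of_notMem_tsupport hxK, image_eq_zero_of_notMem_tsupport hyK]

end Closure

section Lattice

variable {p : ℕ} [Fact p.Prime]

lemma exists_appr (N : ℕ) (x : ℚ_[p]) (hx : ‖x‖ ≤ 1) :
    ∃ n : ℕ, n < p ^ N ∧ ‖x - (n : ℚ_[p])‖ ≤ (p : ℝ) ^ (-(N : ℤ)) := by
  set z : ℤ_[p] := ⟨x, hx⟩ with hz
  refine ⟨z.appr N, z.appr_lt N, ?_⟩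
  have h := ((z - (z.appr N : ℤ_[p])).norm_le_pow_iff_mem_span_pow N).mpr (z.appr_spec N)
  have hcoe : ((z - (z.appr N : ℤ_[p]) : ℤ_[p]) : ℚ_[p]) = x - (z.appr N : ℚ_[p]) := by
    push_cast
    rfl
  rwa [PadicInt.norm_def, hcoe] at h

lemma appr_unique (N : ℕ) (x : ℚ_[p]) {n n' : ℕ} (hn : n < p ^ N) (hn' : n' < p ^ N)
    (h : ‖x - (n : ℚ_[p])‖ ≤ (p : ℝ) ^ (-(N : ℤ)))
    (h' : ‖x - (n' : ℚ_[p])‖ ≤ (p : ℝ) ^ (-(N : ℤ))) : n = n' := by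
  have hd : ‖(((n : ℤ) - (n' : ℤ) : ℤ) : ℚ_[p])‖ ≤ (p : ℝ) ^ (-(N : ℤ)) := by
    have heq : (((n : ℤ) - (n' : ℤ) : ℤ) : ℚ_[p]) = (x - (n' : ℚ_[p])) + -(x - (n : ℚ_[p])) := by
      push_cast; ring
    rw [heq]
    refine le_trans (Padic.nonarchimedean _ _) (max_le h' ?_)
    rwa [norm_neg]
  rw [Padic.norm_int_le_pow_iff_dvd] at hd
  have habs : |(n : ℤ) - (n' : ℤ)| < (p : ℤ) ^ N := by
    have h1 : (n : ℤ) < (p : ℤ) ^ N := by exact_mod_cast hn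
    have h2 : (n' : ℤ) < (p : ℤ) ^ N := by exact_mod_cast hn'
    rw [abs_sub_lt_iff]
    omega
  have := Int.eq_zero_of_abs_lt_dvd hd habs
  omega

lemma exists_center (M m : ℕ) (x : ℚ_[p]) (hx : ‖x‖ ≤ (p : ℝ) ^ (M : ℤ)) :
    ∃ n : ℕ, n < p ^ (M + m) ∧
      ‖x - (n : ℚ_[p]) * (p : ℚ_[p]) ^ (-(M : ℤ))‖ ≤ (p : ℝ) ^ (-(m : ℤ)) := by
  have hy : ‖(p : ℚ_[p]) ^ (M : ℤ) * x‖ ≤ 1 := by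
    rw [norm_mul, Padic.norm_p_zpow]
    calc (p : ℝ) ^ (-(M : ℤ)) * ‖x‖ ≤ (p : ℝ) ^ (-(M : ℤ)) * (p : ℝ) ^ (M : ℤ) := by
          apply mul_le_mul_of_nonneg_left hx (zpow_pos (padic_p_pos_real p) _).le
      _ = 1 := by
          rw [← zpow_add₀ (padic_p_pos_real p).ne', neg_add_cancel, zpow_zero]
  obtain ⟨n, hn, h⟩ := exists_appr (M + m) _ hy
  refine ⟨n, hn, ?_⟩
  have hkey : x - (n : ℚ_[p]) * (p : ℚ_[p]) ^ (-(M : ℤ)) =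
      (p : ℚ_[p]) ^ (-(M : ℤ)) * ((p : ℚ_[p]) ^ (M : ℤ) * x - (n : ℚ_[p])) := by
    have hp0 : (p : ℚ_[p]) ≠ 0 := by
      exact_mod_cast (Fact.out : p.Prime).ne_zero
    rw [mul_sub, ← mul_assoc, ← zpow_add₀ hp0, neg_add_cancel, zpow_zero, one_mul, mul_comm]
  rw [hkey, norm_mul, Padic.norm_p_zpow, neg_neg]
  calc (p : ℝ) ^ (M : ℤ) * ‖(p : ℚ_[p]) ^ (M : ℤ) * x - (n : ℚ_[p])‖
      ≤ (p : ℝ) ^ (M : ℤ) * (p : ℝ) ^ (-((M + m : ℕ) : ℤ)) := by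
        apply mul_le_mul_of_nonneg_left h (zpow_pos (padic_p_pos_real p) _).le
    _ = (p : ℝ) ^ (-(m : ℤ)) := by
        rw [← zpow_add₀ (padic_p_pos_real p).ne']
        congr 1
        push_cast
        ring

lemma center_unique (M m : ℕ) (x : ℚ_[p]) {n n' : ℕ}
    (hn : n < p ^ (M + m)) (hn' : n' < p ^ (M + m))
    (h : ‖x - (n : ℚ_[p]) * (p : ℚ_[p]) ^ (-(M : ℤ))‖ ≤ (p : ℝ) ^ (-(m : ℤ)))
    (h' : ‖x - (n' : ℚ_[p]) * (p : ℚ_[p]) ^ (-(M : ℤ))‖ ≤ (p : ℝ) ^ (-(m : ℤ))) : n = n' := by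
  have hp0 : (p : ℚ_[p]) ≠ 0 := by exact_mod_cast (Fact.out : p.Prime).ne_zero
  have key : ∀ q : ℕ, ‖x - (q : ℚ_[p]) * (p : ℚ_[p]) ^ (-(M : ℤ))‖ ≤ (p : ℝ) ^ (-(m : ℤ)) →
      ‖(p : ℚ_[p]) ^ (M : ℤ) * x - (q : ℚ_[p])‖ ≤ (p : ℝ) ^ (-((M + m : ℕ) : ℤ)) := by
    intro q hq
    have hkey : (p : ℚ_[p]) ^ (M : ℤ) * x - (q : ℚ_[p]) =
        (p : ℚ_[p]) ^ (M : ℤ) * (x - (q : ℚ_[p]) * (p : ℚ_[p]) ^ (-(M : ℤ))) := by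
      rw [mul_sub, ← mul_assoc, mul_comm ((p : ℚ_[p]) ^ (M : ℤ)) ((q : ℚ_[p])), mul_assoc,
        ← zpow_add₀ hp0, add_neg_cancel, zpow_zero, mul_one]
    rw [hkey, norm_mul, Padic.norm_p_zpow]
    calc (p : ℝ) ^ (-(M : ℤ)) * ‖x - (q : ℚ_[p]) * (p : ℚ_[p]) ^ (-(M : ℤ))‖
        ≤ (p : ℝ) ^ (-(M : ℤ)) * (p : ℝ) ^ (-(m : ℤ)) := by
          apply mul_le_mul_of_nonneg_left hq (zpow_pos (padic_p_pos_real p) _).le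
      _ = (p : ℝ) ^ (-((M + m : ℕ) : ℤ)) := by
          rw [← zpow_add₀ (padic_p_pos_real p).ne']
          congr 1
          push_cast
          ring
  exact appr_unique (M + m) ((p : ℚ_[p]) ^ (M : ℤ) * x) hn hn' (key n h) (key n' h')

lemma far_norm (M : ℕ) (n : ℕ) (x : ℚ_[p]) (hx : ¬ ‖x‖ ≤ (p : ℝ) ^ (M : ℤ)) :
    ‖x - (n : ℚ_[p]) * (p : ℚ_[p]) ^ (-(M : ℤ))‖ = ‖x‖ := by
  push_neg at hx
  have hsmall : ‖(n : ℚ_[p]) * (p : ℚ_[p]) ^ (-(M : ℤ))‖ ≤ (p : ℝ) ^ (M : ℤ) := by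
    rw [norm_mul, Padic.norm_p_zpow, neg_neg]
    calc ‖((n : ℤ) : ℚ_[p])‖ * (p : ℝ) ^ (M : ℤ) ≤ 1 * (p : ℝ) ^ (M : ℤ) := by
          apply mul_le_mul_of_nonneg_right _ (zpow_pos (padic_p_pos_real p) _).le
          exact_mod_cast Padic.norm_int_le_one ((n : ℤ))
      _ = (p : ℝ) ^ (M : ℤ) := one_mul _
  have hne : ‖x‖ ≠ ‖-((n : ℚ_[p]) * (p : ℚ_[p]) ^ (-(M : ℤ)))‖ := by
    rw [norm_neg]
    exact fun hcon => (not_le.mpr hx) (le_of_eq_of_le hcon hsmall)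
  have := Padic.add_eq_max_of_ne hne
  rw [← sub_eq_add_neg] at this
  rw [this, norm_neg, max_eq_left (hsmall.trans hx.le)]

end Lattice

section Decomposition

variable {p : ℕ} [Fact p.Prime] {k : Type*} [Field k]

/-- Decomposition of a uniformly locally constant, compactly supported function as a
finite linear combination of ball indicator functions. -/
lemma LCc_decomposition (f : ℚ_[p] → k) (m M : ℕ)
    (hm : ∀ x y : ℚ_[p], ‖x - y‖ ≤ (p : ℝ) ^ (-(m : ℤ)) → f x = f y)
    (hM : ∀ x : ℚ_[p], ¬ ‖x‖ ≤ (p : ℝ) ^ (M : ℤ) → f x = 0) :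
    f = ∑ n ∈ Finset.range (p ^ (M + m)),
      f ((n : ℚ_[p]) * (p : ℚ_[p]) ^ (-(M : ℤ))) •
        indic p k ((n : ℚ_[p]) * (p : ℚ_[p]) ^ (-(M : ℤ))) (-(m : ℤ)) := by
  funext x
  rw [Finset.sum_apply]
  simp only [Pi.smul_apply, smul_eq_mul]
  by_cases hx : ‖x‖ ≤ (p : ℝ) ^ (M : ℤ)
  · obtain ⟨n₀, hn₀, hc⟩ := exists_center M m x hx
    rw [Finset.sum_eq_single n₀]
    · rw [indic, if_pos hc, mul_one]
      exact hm x _ hc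
    · intro n hn hne
      rw [indic, if_neg, mul_zero]
      intro hcon
      exact hne (center_unique M m x (Finset.mem_range.1 hn) hn₀ hcon hc)
    · intro hcon
      exact absurd (Finset.mem_range.2 hn₀) hcon
  · rw [hM x hx]
    symm
    apply Finset.sum_eq_zero
    intro n _
    rw [indic, if_neg, mul_zero]
    rw [far_norm M n x hx]
    intro hcon
    apply hx
    calc ‖x‖ ≤ (p : ℝ) ^ (-(m : ℤ)) := hcon
      _ ≤ (p : ℝ) ^ (M : ℤ) := by
          apply zpow_le_zpow_right₀ (padic_one_lt_real p).le
          omega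

end Decomposition

section MoreAux

variable (p : ℕ) [Fact p.Prime] (k : Type*) [Field k]

lemma norm_le_iff_of_close {z : ℤ} {x y : ℚ_[p]} (h : ‖x - y‖ ≤ (p : ℝ) ^ z) :
    ‖x‖ ≤ (p : ℝ) ^ z ↔ ‖y‖ ≤ (p : ℝ) ^ z := by
  constructor <;> intro hh
  · have : ‖y‖ = ‖x + -(x - y)‖ := by congr 1; ring
    rw [this]
    refine le_trans (Padic.nonarchimedean _ _) (max_le hh ?_)
    rwa [norm_neg]
  · have : ‖x‖ = ‖y + (x - y)‖ := by congr 1; ring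
    rw [this]
    exact le_trans (Padic.nonarchimedean _ _) (max_le hh h)

lemma indic_eq_of_close (c : ℚ_[p]) (z : ℤ) {x y : ℚ_[p]} (h : ‖x - y‖ ≤ (p : ℝ) ^ z) :
    indic p k c z x = indic p k c z y := by
  have hiff : ‖x - c‖ ≤ (p : ℝ) ^ z ↔ ‖y - c‖ ≤ (p : ℝ) ^ z := by
    apply norm_le_iff_of_close p
    have : x - c - (y - c) = x - y := by ring
    rwa [this]
  simp only [indic]
  by_cases hx : ‖x - c‖ ≤ (p : ℝ) ^ z
  · rw [if_pos hx, if_pos (hiff.1 hx)]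
  · rw [if_neg hx, if_neg (fun hc => hx (hiff.2 hc))]

lemma indic_eq_translate (c : ℚ_[p]) (z : ℤ) :
    indic p k c z = fun x => indic p k 0 z (x - c) := by
  funext x
  simp only [indic, sub_zero]

end MoreAux

/-- If `T : LC_c(ℚ_p, k) → LC_c(ℚ_p, k)` is a nonzero `k`-linear map intertwining
`π_{χ₁,χ₂}` and `π_{χ₁',χ₂'}` (i.e. `T ∘ π_{χ₁,χ₂}(g) = π_{χ₁',χ₂'}(g) ∘ T` for all
`g ∈ B(ℚ_p)`), then `χ₁ = χ₁'`, `χ₂ = χ₂'`, and `T` is multiplication by a nonzero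
scalar of `k`. -/
theorem piRep_intertwiner_is_scalar
    (p : ℕ) [Fact p.Prime] (k : Type*) [Field k] [Fintype k] [CharP k p]
    (χ₁ χ₂ χ₁' χ₂' : ℚ_[p]ˣ →* kˣ)
    (hχ₁ : IsLocallyConstant fun u : ℚ_[p]ˣ => (χ₁ u : k))
    (hχ₂ : IsLocallyConstant fun u : ℚ_[p]ˣ => (χ₂ u : k))
    (hχ₁' : IsLocallyConstant fun u : ℚ_[p]ˣ => (χ₁' u : k))
    (hχ₂' : IsLocallyConstant fun u : ℚ_[p]ˣ => (χ₂' u : k))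
    (T : (ℚ_[p] → k) →ₗ[k] (ℚ_[p] → k))
    (hTmaps : ∀ f ∈ LCc p k, T f ∈ LCc p k)
    (hT0 : ∃ f ∈ LCc p k, T f ≠ 0)
    (hcomm : ∀ f ∈ LCc p k, ∀ (a d : ℚ_[p]ˣ) (b : ℚ_[p]),
      T (piRep p χ₁ χ₂ a d b f) = piRep p χ₁' χ₂' a d b (T f)) :
    χ₁ = χ₁' ∧ χ₂ = χ₂' ∧ ∃ c : k, c ≠ 0 ∧ ∀ f ∈ LCc p k, T f = c • f := by
  have hp0Q : (p : ℚ_[p]) ≠ 0 := by exact_mod_cast (Fact.out : p.Prime).ne_zero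
  have hppos := padic_p_pos_real p
  have hp1 := padic_one_lt_real p
  set pu : ℚ_[p]ˣ := Units.mk0 (p : ℚ_[p]) hp0Q with hpu
  have hcoe : ∀ (χ : ℚ_[p]ˣ →* kˣ) (m : ℕ), ((χ (pu ^ m)) : k) = ((χ pu) : k) ^ m := by
    intro χ m; rw [map_pow, Units.val_pow_eq_pow_val]
  have hpum : ∀ m : ℕ, ((pu ^ m : ℚ_[p]ˣ) : ℚ_[p]) = (p : ℚ_[p]) ^ m := by
    intro m; rw [Units.val_pow_eq_pow_val, hpu, Units.val_mk0]
  set e₀ : ℚ_[p] → k := indic p k 0 0 with he₀def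
  have he₀ : e₀ ∈ LCc p k := indic_mem_LCc p k 0 0
  have he₀0 : e₀ 0 = 1 := indic_self p k 0 0
  -- translation equivariance
  have Ttrans : ∀ f ∈ LCc p k, ∀ b : ℚ_[p],
      T (fun x => f (x - b)) = fun x => T f (x - b) := by
    intro f hf b
    have h := hcomm f hf 1 1 b
    have e1 : piRep p χ₁ χ₂ 1 1 b f = fun x => f (x - b) := by
      funext x; simp [piRep]
    have e2 : piRep p χ₁' χ₂' 1 1 b (T f) = fun x => T f (x - b) := by
      funext x; simp [piRep]
    rw [e1, e2] at h
    exact h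
  -- expanding dilation (d-type)
  set α : k := (χ₁' pu : k) * ((χ₁ pu : k))⁻¹ with hαdef
  have Tdil : ∀ f ∈ LCc p k, ∀ m : ℕ,
      T (fun x => f ((p : ℚ_[p]) ^ m * x)) = fun x => α ^ m * T f ((p : ℚ_[p]) ^ m * x) := by
    intro f hf m
    have h := hcomm f hf 1 (pu ^ m) 0
    have e1 : piRep p χ₁ χ₂ 1 (pu ^ m) 0 f
        = ((χ₁ pu : k)) ^ m • (fun x => f ((p : ℚ_[p]) ^ m * x)) := by
      funext x
      simp only [piRep, map_one, Units.val_one, mul_one, hpum, sub_zero, div_one,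
        Pi.smul_apply, smul_eq_mul, hcoe]
    rw [e1, map_smul] at h
    funext x
    have hx := congrFun h x
    rw [Pi.smul_apply, smul_eq_mul] at hx
    have e2 : piRep p χ₁' χ₂' 1 (pu ^ m) 0 (T f) x
        = ((χ₁' pu : k)) ^ m * T f ((p : ℚ_[p]) ^ m * x) := by
      simp only [piRep, map_one, Units.val_one, mul_one, hpum, sub_zero, div_one, hcoe]
    rw [e2] at hx
    have hkey : T (fun x => f ((p : ℚ_[p]) ^ m * x)) x
        = (((χ₁ pu : k))⁻¹) ^ m * (((χ₁' pu : k)) ^ m * T f ((p : ℚ_[p]) ^ m * x)) := by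
      rw [← hx, ← mul_assoc, ← mul_pow, inv_mul_cancel₀ (Units.ne_zero (χ₁ pu)), one_pow, one_mul]
    rw [hkey, hαdef, mul_pow]
    ring
  -- contracting dilation (a-type)
  set β : k := (χ₂' pu : k) * ((χ₂ pu : k))⁻¹ with hβdef
  have Tdil2 : ∀ f ∈ LCc p k, ∀ m : ℕ,
      T (fun x => f ((p : ℚ_[p]) ^ (-(m : ℤ)) * x))
        = fun x => β ^ m * T f ((p : ℚ_[p]) ^ (-(m : ℤ)) * x) := by
    intro f hf m
    have h := hcomm f hf (pu ^ m) 1 0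
    have key : ∀ y : ℚ_[p], (y - 0) / ((pu ^ m : ℚ_[p]ˣ) : ℚ_[p])
        = (p : ℚ_[p]) ^ (-(m : ℤ)) * y := by
      intro y
      rw [sub_zero, hpum]
      rw [div_eq_mul_inv, mul_comm, zpow_neg, zpow_natCast]
    have e1 : piRep p χ₁ χ₂ (pu ^ m) 1 0 f
        = ((χ₂ pu : k)) ^ m • (fun x => f ((p : ℚ_[p]) ^ (-(m : ℤ)) * x)) := by
      funext x
      simp only [piRep, map_one, Units.val_one, one_mul, hcoe,
        Pi.smul_apply, smul_eq_mul, key x]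
    rw [e1, map_smul] at h
    funext x
    have hx := congrFun h x
    rw [Pi.smul_apply, smul_eq_mul] at hx
    have e2 : piRep p χ₁' χ₂' (pu ^ m) 1 0 (T f) x
        = ((χ₂' pu : k)) ^ m * T f ((p : ℚ_[p]) ^ (-(m : ℤ)) * x) := by
      simp only [piRep, map_one, Units.val_one, one_mul, hcoe, key x]
    rw [e2] at hx
    have hkey : T (fun x => f ((p : ℚ_[p]) ^ (-(m : ℤ)) * x)) x
        = (((χ₂ pu : k))⁻¹) ^ m * (((χ₂' pu : k)) ^ m * T f ((p : ℚ_[p]) ^ (-(m : ℤ)) * x)) := by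
      rw [← hx, ← mul_assoc, ← mul_pow, inv_mul_cancel₀ (Units.ne_zero (χ₂ pu)), one_pow, one_mul]
    rw [hkey, hβdef, mul_pow]
    ring
  -- the image of the basic indicator function
  set g : ℚ_[p] → k := T e₀ with hgdef
  have hgLC := hTmaps e₀ he₀
  set c : k := g 0 with hcdef
  -- g is constant equal to c on the unit ball
  have hgball : ∀ x0 : ℚ_[p], ‖x0‖ ≤ (p : ℝ) ^ (0 : ℤ) → g x0 = c := by
    intro x0 hx0
    have htr : (fun x => e₀ (x - x0)) = e₀ := by
      funext x
      rw [he₀def]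
      apply indic_eq_of_close
      have : x - x0 - x = -x0 := by ring
      rwa [this, norm_neg]
    have h1 := Ttrans e₀ he₀ x0
    rw [htr] at h1
    have h2 := congrFun h1 x0
    rw [sub_self] at h2
    exact h2
  -- g vanishes outside the unit ball
  have hgout : ∀ x0 : ℚ_[p], ¬ ‖x0‖ ≤ (p : ℝ) ^ (0 : ℤ) → g x0 = 0 := by
    intro x0 hx0
    obtain ⟨N, hN⟩ := LCc_supp_bound hgLC.2
    set m : ℕ := N + 1 with hmdef
    set F : ℚ_[p] → k := fun x => e₀ ((p : ℚ_[p]) ^ m * x) with hFdef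
    have hFm : ∀ x y : ℚ_[p], ‖x - y‖ ≤ (p : ℝ) ^ (-(0 : ℕ) : ℤ) → F x = F y := by
      intro x y hxy
      rw [hFdef]
      apply indic_eq_of_close
      have heq : (p : ℚ_[p]) ^ m * x - (p : ℚ_[p]) ^ m * y = (p : ℚ_[p]) ^ m * (x - y) := by ring
      rw [heq, norm_mul, Padic.norm_p_pow]
      calc (p : ℝ) ^ (-(m : ℤ)) * ‖x - y‖ ≤ 1 * 1 := by
            apply mul_le_mul _ (by simpa using hxy) (norm_nonneg _) zero_le_one
            apply zpow_le_one_of_nonpos₀ hp1.le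
            omega
        _ = (p : ℝ) ^ (0 : ℤ) := by norm_num
    have hFM : ∀ x : ℚ_[p], ¬ ‖x‖ ≤ (p : ℝ) ^ (m : ℤ) → F x = 0 := by
      intro x hx
      show e₀ ((p : ℚ_[p]) ^ m * x) = 0
      rw [he₀def, indic, if_neg]
      rw [sub_zero, norm_mul, Padic.norm_p_pow]
      intro hcon
      apply hx
      have := mul_le_mul_of_nonneg_left hcon (zpow_pos hppos (m : ℤ)).le
      rw [← mul_assoc, ← zpow_add₀ hppos.ne', add_neg_cancel, zpow_zero, one_mul, mul_one] at this
      exact this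
    have hdec := LCc_decomposition F 0 m hFm hFM
    -- apply T to both representations of F
    have hTa : T F = fun x => α ^ m * g ((p : ℚ_[p]) ^ m * x) := Tdil e₀ he₀ m
    have hTb : T F = ∑ n ∈ Finset.range (p ^ (m + 0)),
        F ((n : ℚ_[p]) * (p : ℚ_[p]) ^ (-(m : ℤ))) •
          (fun x => g (x - (n : ℚ_[p]) * (p : ℚ_[p]) ^ (-(m : ℤ)))) := by
      conv_lhs => rw [hdec]
      rw [map_sum]
      apply Finset.sum_congr rfl
      intro n _
      have hind : indic p k ((n : ℚ_[p]) * (p : ℚ_[p]) ^ (-(m : ℤ))) (-(0 : ℕ) : ℤ)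
          = fun x => e₀ (x - (n : ℚ_[p]) * (p : ℚ_[p]) ^ (-(m : ℤ))) := by
        rw [indic_eq_translate, he₀def]
        norm_num
      have hind2 : T (indic p k ((n : ℚ_[p]) * (p : ℚ_[p]) ^ (-(m : ℤ))) (-(0 : ℕ) : ℤ))
          = fun x => g (x - (n : ℚ_[p]) * (p : ℚ_[p]) ^ (-(m : ℤ))) := by
        rw [hind]
        exact Ttrans e₀ he₀ _
      rw [map_smul, hind2]
    -- evaluate at p^{-m} x0
    set x : ℚ_[p] := (p : ℚ_[p]) ^ (-(m : ℤ)) * x0 with hxdef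
    have hxnorm : ¬ ‖x‖ ≤ (p : ℝ) ^ (m : ℤ) := by
      rw [hxdef, norm_mul, Padic.norm_p_zpow, neg_neg]
      intro hcon
      apply hx0
      have hple : (0:ℝ) < (p : ℝ) ^ (m : ℤ) := zpow_pos hppos _
      rw [zpow_zero]
      calc ‖x0‖ = ((p : ℝ) ^ (m : ℤ))⁻¹ * ((p : ℝ) ^ (m : ℤ) * ‖x0‖) := by
            field_simp
        _ ≤ ((p : ℝ) ^ (m : ℤ))⁻¹ * (p : ℝ) ^ (m : ℤ) := by
            apply mul_le_mul_of_nonneg_left hcon (inv_nonneg.2 hple.le)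
        _ = 1 := inv_mul_cancel₀ hple.ne'
    have hback : (p : ℚ_[p]) ^ m * x = x0 := by
      rw [hxdef, ← mul_assoc, ← zpow_natCast (p : ℚ_[p]) m, ← zpow_add₀ hp0Q, add_neg_cancel,
        zpow_zero, one_mul]
    have hval_a : T F x = α ^ m * g x0 := by
      rw [hTa]
      show α ^ m * g ((p : ℚ_[p]) ^ m * x) = _
      rw [hback]
    have hval_b : T F x = 0 := by
      rw [hTb, Finset.sum_apply]
      apply Finset.sum_eq_zero
      intro n _
      simp only [Pi.smul_apply, smul_eq_mul]
      have : g (x - (n : ℚ_[p]) * (p : ℚ_[p]) ^ (-(m : ℤ))) = 0 := by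
        apply hN
        rw [far_norm m n x hxnorm]
        intro hcon
        apply hxnorm
        calc ‖x‖ ≤ (p : ℝ) ^ (N : ℤ) := hcon
          _ ≤ (p : ℝ) ^ (m : ℤ) := by
              apply zpow_le_zpow_right₀ hp1.le
              omega
      rw [this, mul_zero]
    have hαm : α ^ m ≠ 0 := by
      apply pow_ne_zero
      rw [hαdef]
      exact mul_ne_zero (Units.ne_zero _) (inv_ne_zero (Units.ne_zero _))
    have := hval_a.symm.trans hval_b
    exact (mul_eq_zero.1 this).resolve_left hαm
  -- hence g = c • e₀
  have hge : g = c • e₀ := by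
    funext x
    rw [Pi.smul_apply, smul_eq_mul]
    by_cases hx : ‖x‖ ≤ (p : ℝ) ^ (0 : ℤ)
    · rw [hgball x hx, he₀def, indic, sub_zero, if_pos hx, mul_one]
    · rw [hgout x hx, he₀def, indic, sub_zero, if_neg hx, mul_zero]
  -- small ball indicators are dilates of e₀
  have hsmall : ∀ m : ℕ, indic p k 0 (-(m : ℤ)) = fun x => e₀ ((p : ℚ_[p]) ^ (-(m : ℤ)) * x) := by
    intro m
    funext x
    rw [he₀def]
    simp only [indic, sub_zero]
    have hiff : ‖(p : ℚ_[p]) ^ (-(m : ℤ)) * x‖ ≤ (p : ℝ) ^ (0 : ℤ) ↔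
        ‖x‖ ≤ (p : ℝ) ^ (-(m : ℤ)) := by
      rw [norm_mul, Padic.norm_p_zpow, neg_neg, zpow_zero, mul_comm,
        ← le_div_iff₀ (zpow_pos hppos _), one_div, ← zpow_neg]
    by_cases hx : ‖x‖ ≤ (p : ℝ) ^ (-(m : ℤ))
    · rw [if_pos hx, if_pos (hiff.2 hx)]
    · rw [if_neg hx, if_neg (fun hcon => hx (hiff.1 hcon))]
  -- T on small ball indicators
  have Tind : ∀ (m : ℕ) (r : ℚ_[p]), T (indic p k r (-(m : ℤ)))
      = (β ^ m * c) • indic p k r (-(m : ℤ)) := by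
    intro m r
    have h0 : T (indic p k 0 (-(m : ℤ))) = (β ^ m * c) • indic p k 0 (-(m : ℤ)) := by
      rw [hsmall m, Tdil2 e₀ he₀ m]
      funext x
      rw [Pi.smul_apply, smul_eq_mul]
      show β ^ m * g ((p : ℚ_[p]) ^ (-(m : ℤ)) * x)
          = (β ^ m * c) * e₀ ((p : ℚ_[p]) ^ (-(m : ℤ)) * x)
      rw [hge, Pi.smul_apply, smul_eq_mul]
      ring
    have htr := Ttrans (indic p k 0 (-(m : ℤ))) (indic_mem_LCc p k 0 _) r
    rw [indic_eq_translate p k r (-(m : ℤ)), htr, h0]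
    funext x
    simp only [Pi.smul_apply, smul_eq_mul]
  -- T is scalar on every function of LC_c, with scale-dependent scalar
  have Tgen : ∀ f ∈ LCc p k, ∀ (m M : ℕ),
      (∀ x y : ℚ_[p], ‖x - y‖ ≤ (p : ℝ) ^ (-(m : ℤ)) → f x = f y) →
      (∀ x : ℚ_[p], ¬ ‖x‖ ≤ (p : ℝ) ^ (M : ℤ) → f x = 0) →
      T f = (β ^ m * c) • f := by
    intro f hf m M hm hM
    have hdec := LCc_decomposition f m M hm hM
    conv_lhs => rw [hdec]
    rw [map_sum]
    conv_rhs => rw [hdec]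
    rw [Finset.smul_sum]
    apply Finset.sum_congr rfl
    intro n _
    rw [map_smul, Tind m _, smul_comm]
  -- the scalar is independent of the scale
  have he₀m : ∀ m : ℕ, ∀ x y : ℚ_[p], ‖x - y‖ ≤ (p : ℝ) ^ (-(m : ℤ)) → e₀ x = e₀ y := by
    intro m x y h
    rw [he₀def]
    apply indic_eq_of_close
    refine h.trans (zpow_le_zpow_right₀ hp1.le ?_)
    omega
  have he₀M : ∀ x : ℚ_[p], ¬ ‖x‖ ≤ (p : ℝ) ^ ((0 : ℕ) : ℤ) → e₀ x = 0 := by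
    intro x hx
    rw [he₀def, indic, if_neg]
    rw [sub_zero]
    exact_mod_cast hx
  have hT0e : T e₀ = (β ^ 0 * c) • e₀ := Tgen e₀ he₀ 0 0 (he₀m 0) he₀M
  have hT1e : T e₀ = (β ^ 1 * c) • e₀ := Tgen e₀ he₀ 1 0 (he₀m 1) he₀M
  have hcβ : c = β * c := by
    have h := congrFun (hT0e.symm.trans hT1e) 0
    rw [Pi.smul_apply, Pi.smul_apply, smul_eq_mul, smul_eq_mul, he₀0, mul_one, mul_one,
      pow_zero, pow_one, one_mul] at h
    exact h
  have hc0 : c ≠ 0 := by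
    intro hc
    obtain ⟨f, hf, hTf⟩ := hT0
    obtain ⟨m, hm⟩ := LCc_inv_scale hf.1 hf.2
    obtain ⟨M, hM⟩ := LCc_supp_bound hf.2
    have := Tgen f hf m M hm hM
    rw [hc, mul_zero, zero_smul] at this
    exact hTf this
  have hβ1 : β = 1 := by
    apply mul_right_cancel₀ hc0
    rw [one_mul, ← hcβ]
  have Tscalar : ∀ f ∈ LCc p k, T f = c • f := by
    intro f hf
    obtain ⟨m, hm⟩ := LCc_inv_scale hf.1 hf.2
    obtain ⟨M, hM⟩ := LCc_supp_bound hf.2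
    have := Tgen f hf m M hm hM
    rwa [hβ1, one_pow, one_mul] at this
  -- extract the characters
  have hchar : ∀ a d : ℚ_[p]ˣ, (χ₁ d : k) * (χ₂ a : k) = (χ₁' d : k) * (χ₂' a : k) := by
    intro a d
    have hmemP : piRep p χ₁ χ₂ a d 0 e₀ ∈ LCc p k :=
      LCc_comp_affine he₀ ((χ₁ d : k) * (χ₂ a : k)) (a : ℚ_[p]) (d : ℚ_[p]) 0
        (Units.ne_zero a) (Units.ne_zero d)
    have h := hcomm e₀ he₀ a d 0
    rw [Tscalar _ hmemP, Tscalar _ he₀] at h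
    have h0 := congrFun h 0
    simp only [Pi.smul_apply, smul_eq_mul, piRep] at h0
    have hz : ((d : ℚ_[p]) * 0 - 0) / (a : ℚ_[p]) = 0 := by simp
    rw [hz, he₀0, mul_one, mul_one] at h0
    apply mul_left_cancel₀ hc0
    rw [h0]
    ring
  have hchi1 : χ₁ = χ₁' := by
    apply MonoidHom.ext
    intro d
    have h := hchar 1 d
    simp only [map_one, Units.val_one, mul_one] at h
    exact Units.ext h
  have hchi2 : χ₂ = χ₂' := by
    apply MonoidHom.ext
    intro a
    have h := hchar a 1
    simp only [map_one, Units.val_one, one_mul] at h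
    exact Units.ext h
  exact ⟨hchi1, hchi2, c, hc0, Tscalar⟩
end

section
/- Let a ∈ ℤ_p^× and let f = c·X^{−1} + g ∈ X^{−1}k[[X]] with c ∈ k and g ∈ k[[X]]. Define γ_a(f) = c·(ι(a) − 1)^{−1} + g(ι(a) − 1), where (ι(a) − 1)^{−1} is the inverse of ι(a) − 1 in k((X)) and g(ι(a) − 1) is the substitution of the constant-term-free power series ι(a) − 1 for X in g. Then γ_a(f) ∈ X^{−1}k[[X]] and res(γ_a(f)) = ā^{−1}·c, where ā ∈ k is the image of a under reduction modulo p followed by the inclusion F_p ⊆ k. -/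
/-- Two locally constant functions on `ℤ_[p]` agreeing on `ℕ` are equal. -/
lemma lc_eq_of_natCast {p : ℕ} [Fact p.Prime] {α : Type*} {f g : ℤ_[p] → α}
    (hf : IsLocallyConstant f) (hg : IsLocallyConstant g)
    (h : ∀ n : ℕ, f (n : ℤ_[p]) = g (n : ℤ_[p])) (x : ℤ_[p]) : f x = g x := by
  by_contra hx
  have hopen : IsOpen {y : ℤ_[p] | f y ≠ g y} := by
    have := (hf.prodMk hg) {q : α × α | q.1 ≠ q.2}
    exact this
  obtain ⟨n, hn⟩ := PadicInt.denseRange_natCast.exists_mem_open hopen ⟨x, hx⟩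
  exact hn (h n)

/-- `PadicInt.toZMod` is locally constant. -/
lemma lc_toZMod {p : ℕ} [Fact p.Prime] :
    IsLocallyConstant (fun x : ℤ_[p] => PadicInt.toZMod x) := by
  rw [IsLocallyConstant.iff_exists_open]
  intro x
  refine ⟨Metric.ball x 1, Metric.isOpen_ball, by simp, fun y hy => ?_⟩
  have hnorm : ‖y - x‖ < 1 := by rwa [← dist_eq_norm]
  have hker : y - x ∈ RingHom.ker (PadicInt.toZMod : ℤ_[p] →+* ZMod p) := by
    rw [PadicInt.ker_toZMod, PadicInt.maximalIdeal_eq_span_p, Ideal.mem_span_singleton]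
    exact (PadicInt.norm_lt_one_iff_dvd _).1 hnorm
  have : PadicInt.toZMod (y - x) = 0 := hker
  rw [map_sub, sub_eq_zero] at this
  exact this

/-- Let `a ∈ ℤ_p^×`, and let `f = c·X⁻¹ + g ∈ X⁻¹k⟦X⟧` with `c ∈ k`, `g ∈ k⟦X⟧`.
Define `γ_a(f) = c·((1+X)^a − 1)⁻¹ + g((1+X)^a − 1)`, where `((1+X)^a − 1)⁻¹` is the
inverse in `k((X))` and `g((1+X)^a − 1)` is the substitution of the constant-term-free
power series `(1+X)^a − 1` for `X` in `g`.  Then `γ_a(f) ∈ X⁻¹k⟦X⟧` and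
`res(γ_a(f)) = ā⁻¹·c`, where `ā ∈ k` is the image of `a` under reduction mod `p`
followed by the inclusion `F_p ⊆ k`.  Here `ι : ℤ_p → k⟦X⟧`, `a ↦ (1+X)^a`, is the
unique map with `ι(x+y) = ι(x)ι(y)`, `ι(1) = 1+X` and locally constant coefficients. -/
theorem gamma_action_on_Xinv
    (p : ℕ) [Fact p.Prime] (k : Type*) [Field k] [Fintype k] [CharP k p]
    (ι : ℤ_[p] → PowerSeries k)
    (hι_add : ∀ x y : ℤ_[p], ι (x + y) = ι x * ι y)
    (hι_one : ι 1 = 1 + PowerSeries.X)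
    (hι_lc : ∀ n : ℕ, IsLocallyConstant fun x : ℤ_[p] => PowerSeries.coeff n (ι x))
    (a : ℤ_[p]ˣ) (c : k) (g : PowerSeries k)
    (γ : LaurentSeries k)
    (hγ : γ = c • (HahnSeries.ofPowerSeries ℤ k (ι (a : ℤ_[p])) - 1)⁻¹ +
      HahnSeries.ofPowerSeries ℤ k (pscomp g (ι (a : ℤ_[p]) - 1))) :
    (∀ n : ℤ, n < -1 → γ.coeff n = 0) ∧
    γ.coeff (-1) = ((ZMod.castHom (dvd_refl p) k) (PadicInt.toZMod (a : ℤ_[p])))⁻¹ * c := by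
  -- ι 0 = 1
  have hX : (1 + PowerSeries.X : PowerSeries k) ≠ 0 := by
    intro h
    have := congrArg (PowerSeries.coeff 1) h
    simp at this
  have hι0 : ι 0 = 1 := by
    have h := hι_add 0 1
    rw [zero_add, hι_one] at h
    have : (1 : PowerSeries k) * (1 + PowerSeries.X) = ι 0 * (1 + PowerSeries.X) := by
      rw [one_mul, ← h]
    exact (mul_right_cancel₀ hX this).symm
  -- constant coefficient of ι x is 1
  have hC : ∀ x : ℤ_[p], PowerSeries.constantCoeff (ι x) = 1 := by
    have hlc0 : IsLocallyConstant fun x : ℤ_[p] => PowerSeries.constantCoeff (ι x) := by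
      have := hι_lc 0
      simpa [PowerSeries.coeff_zero_eq_constantCoeff] using this
    have hnat : ∀ n : ℕ, PowerSeries.constantCoeff (ι (n : ℤ_[p])) = 1 := by
      intro n
      induction n with
      | zero => simp [hι0]
      | succ m ih =>
        have : ((m : ℤ_[p]) + 1) = ((m + 1 : ℕ) : ℤ_[p]) := by push_cast; ring
        rw [← this, hι_add, map_mul, ih, hι_one, one_mul, map_add, map_one]
        simp
    intro x
    exact lc_eq_of_natCast hlc0 (IsLocallyConstant.const 1)
      (fun n => by simpa using hnat n) x
  -- the X-coefficient of ι x is the reduction of x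
  set abar : k := (ZMod.castHom (dvd_refl p) k) (PadicInt.toZMod (a : ℤ_[p])) with habar
  have hL : ∀ x : ℤ_[p], PowerSeries.coeff 1 (ι x) =
      (ZMod.castHom (dvd_refl p) k) (PadicInt.toZMod x) := by
    have hlcL : IsLocallyConstant fun x : ℤ_[p] => PowerSeries.coeff 1 (ι x) := hι_lc 1
    have hlcR : IsLocallyConstant
        fun x : ℤ_[p] => (ZMod.castHom (dvd_refl p) k) (PadicInt.toZMod x) :=
      lc_toZMod.comp (ZMod.castHom (dvd_refl p) k)
    have hnat : ∀ n : ℕ, PowerSeries.coeff 1 (ι (n : ℤ_[p])) = (n : k) := by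
      intro n
      induction n with
      | zero => simp [hι0]
      | succ m ih =>
        have h1 : ((m : ℤ_[p]) + 1) = ((m + 1 : ℕ) : ℤ_[p]) := by push_cast; ring
        rw [← h1, hι_add, hι_one, mul_add, mul_one, map_add, ih]
        have : PowerSeries.coeff 1 (ι (m : ℤ_[p]) * PowerSeries.X) =
            PowerSeries.coeff 0 (ι (m : ℤ_[p])) := PowerSeries.coeff_succ_mul_X 0 _
        rw [this, PowerSeries.coeff_zero_eq_constantCoeff, hC]
        push_cast; ring
    intro x
    refine lc_eq_of_natCast hlcL hlcR (fun n => ?_) x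
    rw [hnat n, map_natCast (PadicInt.toZMod : ℤ_[p] →+* ZMod p), map_natCast]
  -- abar ≠ 0
  have habar_ne : abar ≠ 0 := by
    have hu : IsUnit (PadicInt.toZMod (a : ℤ_[p])) :=
      (PadicInt.toZMod : ℤ_[p] →+* ZMod p).isUnit_map a.isUnit
    have h1 : PadicInt.toZMod (a : ℤ_[p]) ≠ 0 := hu.ne_zero
    rw [habar]
    exact fun h => h1 ((map_eq_zero_iff _ (ZMod.castHom (dvd_refl p) k).injective).1 h)
  -- factor ι a - 1 = X * u
  have hdvd : (PowerSeries.X : PowerSeries k) ∣ (ι (a : ℤ_[p]) - 1) := by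
    rw [PowerSeries.X_dvd_iff, map_sub, hC, map_one, sub_self]
  obtain ⟨u, hu⟩ := hdvd
  have hcu : PowerSeries.constantCoeff u = abar := by
    have h1 : PowerSeries.coeff 1 (ι (a : ℤ_[p]) - 1) = abar := by
      rw [map_sub, hL]; simp [habar]
    rw [hu] at h1
    rw [← PowerSeries.coeff_zero_eq_constantCoeff]
    have := PowerSeries.coeff_succ_X_mul 0 u (R := k)
    rw [this] at h1
    exact h1
  -- u is a unit; v its inverse
  have huu : IsUnit u := PowerSeries.isUnit_iff_constantCoeff.2 (by rw [hcu]; exact habar_ne.isUnit)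
  obtain ⟨U, hU⟩ := huu
  set v : PowerSeries k := ↑U⁻¹ with hv
  have huv : u * v = 1 := by rw [← hU, hv]; exact_mod_cast U.mul_inv
  have hcv : PowerSeries.constantCoeff v = abar⁻¹ := by
    have := congrArg (PowerSeries.constantCoeff) huv
    rw [map_mul, map_one, hcu] at this
    have h2 : abar * PowerSeries.constantCoeff v = 1 := this
    field_simp
    linear_combination h2
  -- Laurent series manipulations
  set Φ := HahnSeries.ofPowerSeries ℤ k with hΦ
  have h1 : Φ (ι (a : ℤ_[p])) - 1 = HahnSeries.single (1 : ℤ) (1 : k) * Φ u := by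
    rw [← HahnSeries.ofPowerSeries_X, ← map_mul, ← hu, map_sub, map_one]
  have hinv : (Φ (ι (a : ℤ_[p])) - 1)⁻¹ = HahnSeries.single (-1 : ℤ) (1 : k) * Φ v := by
    rw [h1]
    refine inv_eq_of_mul_eq_one_right ?_
    have hs : (HahnSeries.single (1 : ℤ) (1 : k)) * HahnSeries.single (-1 : ℤ) (1 : k) = 1 := by
      rw [HahnSeries.single_mul_single]
      norm_num
    calc HahnSeries.single (1 : ℤ) (1 : k) * Φ u *
          (HahnSeries.single (-1 : ℤ) (1 : k) * Φ v)
        = (HahnSeries.single (1 : ℤ) (1 : k) * HahnSeries.single (-1 : ℤ) (1 : k)) *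
          (Φ u * Φ v) := by ring
      _ = 1 := by rw [hs, ← map_mul, huv, map_one, one_mul]
  have hcoeff : ∀ n : ℤ, (HahnSeries.single (-1 : ℤ) (1 : k) * Φ v).coeff n =
      (Φ v).coeff (n + 1) := by
    intro n
    have := HahnSeries.coeff_single_mul_add (r := (1 : k)) (x := Φ v) (a := n + 1) (b := -1)
    rw [show n + 1 + (-1 : ℤ) = n by ring, one_mul] at this
    exact this
  have hΦcoeff : ∀ (f : PowerSeries k) (i : ℤ),
      (Φ f).coeff i = if i < 0 then 0 else PowerSeries.coeff i.natAbs f := by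
    intro f i
    exact PowerSeries.coeff_coe f i
  have hγc : ∀ n : ℤ, γ.coeff n = c * (Φ v).coeff (n + 1) +
      (Φ (pscomp g (ι (a : ℤ_[p]) - 1))).coeff n := by
    intro n
    rw [hγ, HahnSeries.coeff_add, HahnSeries.coeff_smul, hinv, hcoeff, smul_eq_mul]
  constructor
  · intro n hn
    rw [hγc n, hΦcoeff, hΦcoeff, if_pos (by omega : n + 1 < 0), if_pos (by omega : n < 0)]
    ring
  · rw [hγc (-1), hΦcoeff, hΦcoeff]
    norm_num
    rw [hcv]
    ring
end
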